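/- arXiv:2601.21818 — 8 statements merged into one kernel-verified Lean document; each statement's English description precedes it below -/
import Mathlib

section
/- Let n ≥ 1, p ≥ 1, let A be a Schur stable real p×p matrix, and let w : V → ℝ where V = {0,…,p−1}. For each index tuple (i_1,…,i_n) ∈ V^n the series ∑_{l=0}^∞ ∑_{r∈V} w_r · (A^l)_{i_1 r} ⋯ (A^l)_{i_n r} converges absolutely, and its sum T(i_1,…,i_n) satisfies the order-n discrete Lyapunov recursion T(i_1,…,i_n) = ∑_{(j_1,…,j_n)∈V^n} (∏_{m=1}^n A_{i_m j_m}) · T(j_1,…,j_n) + Ω(i_1,…,i_n), where Ω(i_1,…,i_n) = w_{i_1} if i_1 = i_2 = ⋯ = i_n and Ω(i_1,…,i_n) = 0 otherwise. -/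
/-!
By Gelfand's formula, Schur stability gives `c < 1` with `|(A ^ l) i j| ≤ c ^ l` for all large `l`,
so the `l`-th term of the series is `O((c ^ n) ^ l)` and the series converges absolutely.
Writing `A ^ (l + 1) = A * A ^ l` and expanding the product over `m` expresses the `(l + 1)`-st term
at `i` as `∑ j, (∏ m, A (i m) (j m))` times the `l`-th term at `j`, while the `0`-th term is `Ω(i)`;
splitting off `l = 0` from the series gives the recursion.
-/

open Matrix Filter
open scoped ENNReal NNReal Matrix.Norms.Operator

theorem spectrum.eventually_nnnorm_pow_le_of_spectralRadius_lt {A : Type*} [NormedRing A]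
    [NormedAlgebra ℂ A] [CompleteSpace A] (a : A) {c : ℝ≥0} (hc : spectralRadius ℂ a < c) :
    ∀ᶠ l : ℕ in atTop, ‖a ^ l‖₊ ≤ c ^ l := by
  filter_upwards [(pow_nnnorm_pow_one_div_tendsto_nhds_spectralRadius a).eventually_lt_const hc,
    eventually_ge_atTop 1] with l hl hl1
  have hl0 : (l : ℝ) ≠ 0 := by positivity
  have : (‖a ^ l‖₊ : ℝ≥0∞) < (c : ℝ≥0∞) ^ (l : ℝ) := by
    calc (‖a ^ l‖₊ : ℝ≥0∞) = ((‖a ^ l‖₊ : ℝ≥0∞) ^ (1 / (l : ℝ))) ^ (l : ℝ) := by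
          rw [← ENNReal.rpow_mul, one_div_mul_cancel hl0, ENNReal.rpow_one]
      _ < (c : ℝ≥0∞) ^ (l : ℝ) := ENNReal.rpow_lt_rpow hl (by positivity)
  rw [ENNReal.rpow_natCast, ← ENNReal.coe_pow, ENNReal.coe_lt_coe] at this
  exact this.le

theorem Matrix.nnnorm_entry_le_linfty_opNNNorm {m n α : Type*} [Fintype m] [Fintype n]
    [SeminormedAddCommGroup α] (M : Matrix m n α) (i : m) (j : n) : ‖M i j‖₊ ≤ ‖M‖₊ := by
  rw [linfty_opNNNorm_def]
  calc ‖M i j‖₊ ≤ ∑ k, ‖M i k‖₊ :=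
        Finset.single_le_sum (f := fun k => ‖M i k‖₊) (fun _ _ => zero_le) (Finset.mem_univ j)
    _ ≤ _ := Finset.le_sup (f := fun i => ∑ k, ‖M i k‖₊) (Finset.mem_univ i)

def Matrix.IsSchurStable {ι : Type*} [Fintype ι] [DecidableEq ι] (A : Matrix ι ι ℝ) : Prop :=
  ∀ μ ∈ spectrum ℂ (A.map (algebraMap ℝ ℂ)), ‖μ‖ < 1

theorem Matrix.IsSchurStable.exists_abs_pow_apply_le {ι : Type*} [Fintype ι] [DecidableEq ι]
    {A : Matrix ι ι ℝ} (hA : A.IsSchurStable) :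
    ∃ c : ℝ, 0 ≤ c ∧ c < 1 ∧ ∀ᶠ l : ℕ in atTop, ∀ i j, |(A ^ l) i j| ≤ c ^ l := by
  rcases isEmpty_or_nonempty ι with _ | _
  · exact ⟨0, le_rfl, zero_lt_one, .of_forall fun _ i => isEmptyElim i⟩
  -- Gelfand's formula for the complexification, in the `L∞` operator norm, which bounds each entry.
  have hρ : spectralRadius ℂ (A.map (algebraMap ℝ ℂ)) < (1 : ℝ≥0) :=
    spectrum.spectralRadius_lt_of_forall_lt _ fun z hz => mod_cast hA z hz
  obtain ⟨c, hρc, hc1⟩ := ENNReal.lt_iff_exists_nnreal_btwn.mp hρ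
  refine ⟨c, c.coe_nonneg, mod_cast hc1, ?_⟩
  filter_upwards [spectrum.eventually_nnnorm_pow_le_of_spectralRadius_lt _ hρc] with l hl i j
  have := (nnnorm_entry_le_linfty_opNNNorm _ i j).trans hl
  rw [← Matrix.map_pow, map_apply] at this
  simpa [← Real.norm_eq_abs] using (NNReal.coe_le_coe.mpr this)

section LyapunovTerm

variable {R ι κ : Type*} [Fintype ι] [DecidableEq ι] [Fintype κ]

/-- The `l`-th term of the series defining `T(j)`. -/
def lyapunovTerm [CommSemiring R] (A : Matrix ι ι R) (w : ι → R) (j : κ → ι) (l : ℕ) : R :=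
  ∑ r, w r * ∏ m, (A ^ l) (j m) r

theorem lyapunovTerm_zero [CommSemiring R] (A : Matrix ι ι R) (w : ι → R) (j : κ → ι) (m₀ : κ)
    [Decidable (∀ m, j m = j m₀)] :
    lyapunovTerm A w j 0 = if ∀ m, j m = j m₀ then w (j m₀) else 0 := by
  simp only [lyapunovTerm, pow_zero, one_apply, Finset.prod_boole, Finset.mem_univ, forall_const,
    mul_ite, mul_one, mul_zero]
  split_ifs with h
  · rw [Finset.sum_eq_single (j m₀)]
    · simp [h]
    · exact fun r _ hr => if_neg fun hall => hr (hall m₀).symm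
    · simp
  · exact Finset.sum_eq_zero fun r _ =>
      if_neg fun hall => h fun m => (hall m).trans (hall m₀).symm

theorem lyapunovTerm_succ [CommSemiring R] [DecidableEq κ] (A : Matrix ι ι R) (w : ι → R)
    (j : κ → ι) (l : ℕ) :
    lyapunovTerm A w j (l + 1) = ∑ k : κ → ι, (∏ m, A (j m) (k m)) * lyapunovTerm A w k l := by
  have hprod : ∀ r, ∏ m, (A ^ (l + 1)) (j m) r
      = ∑ k : κ → ι, (∏ m, A (j m) (k m)) * ∏ m, (A ^ l) (k m) r := by
    intro r
    simp only [pow_succ', mul_apply, Finset.prod_univ_sum, Fintype.piFinset_univ,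
      Finset.prod_mul_distrib]
  simp only [lyapunovTerm, hprod, Finset.mul_sum]
  rw [Finset.sum_comm]
  exact Finset.sum_congr rfl fun k _ => Finset.sum_congr rfl fun r _ => by ring

theorem tsum_lyapunovTerm_eq [CommRing R] [TopologicalSpace R] [IsTopologicalRing R]
    [T2Space R] [DecidableEq κ] {A : Matrix ι ι R} {w : ι → R}
    (hs : ∀ k : κ → ι, Summable (lyapunovTerm A w k)) (j : κ → ι) :
    ∑' l, lyapunovTerm A w j l
      = ∑ k : κ → ι, (∏ m, A (j m) (k m)) * ∑' l, lyapunovTerm A w k l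
        + lyapunovTerm A w j 0 := by
  rw [(hs j).tsum_eq_zero_add, add_comm]
  simp only [lyapunovTerm_succ]
  rw [Summable.tsum_finsetSum fun k _ => (hs k).mul_left _]
  congr 1
  exact Finset.sum_congr rfl fun k _ => (hs k).tsum_mul_left _

end LyapunovTerm

theorem summable_abs_lyapunovTerm {ι κ : Type*} [Fintype ι] [DecidableEq ι] [Fintype κ]
    [Nonempty κ] {A : Matrix ι ι ℝ} (hA : A.IsSchurStable) (w : ι → ℝ) (j : κ → ι) :
    Summable fun l => |lyapunovTerm A w j l| := by
  obtain ⟨c, hc0, hc1, hbound⟩ := hA.exists_abs_pow_apply_le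
  have hgeom : Summable fun l : ℕ => (∑ r, |w r|) * (c ^ Fintype.card κ) ^ l :=
    (summable_geometric_of_lt_one (by positivity)
      (pow_lt_one₀ hc0 hc1 Fintype.card_ne_zero)).mul_left _
  refine .of_norm_bounded_eventually_nat hgeom ?_
  filter_upwards [hbound] with l hl
  rw [Real.norm_eq_abs, abs_abs, Finset.sum_mul]
  refine (Finset.abs_sum_le_sum_abs _ _).trans (Finset.sum_le_sum fun r _ => ?_)
  rw [abs_mul, Finset.abs_prod]
  gcongr
  calc ∏ m, |(A ^ l) (j m) r| ≤ ∏ _m : κ, c ^ l :=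
        Finset.prod_le_prod (fun _ _ => abs_nonneg _) fun m _ => hl _ _
    _ = (c ^ Fintype.card κ) ^ l := by
        rw [Finset.prod_const, Finset.card_univ, ← pow_mul, ← pow_mul, mul_comm]

theorem stmt_1_general (n p : ℕ) (hn : 1 ≤ n)
    (A : Matrix (Fin p) (Fin p) ℝ)
    (hA : ∀ μ ∈ spectrum ℂ (A.map (algebraMap ℝ ℂ)), ‖μ‖ < 1)
    (w : Fin p → ℝ) (i : Fin n → Fin p) :
    Summable (fun l : ℕ => |∑ r : Fin p, w r * ∏ m : Fin n, (A ^ l) (i m) r|) ∧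
    (∑' l : ℕ, ∑ r : Fin p, w r * ∏ m : Fin n, (A ^ l) (i m) r)
      = (∑ j : Fin n → Fin p, (∏ m : Fin n, A (i m) (j m)) *
            ∑' l : ℕ, ∑ r : Fin p, w r * ∏ m : Fin n, (A ^ l) (j m) r)
        + (if ∀ m : Fin n, i m = i ⟨0, hn⟩ then w (i ⟨0, hn⟩) else 0) := by
  have : Nonempty (Fin n) := ⟨⟨0, hn⟩⟩
  have hsum : ∀ j : Fin n → Fin p, Summable fun l => |lyapunovTerm A w j l| :=
    summable_abs_lyapunovTerm hA w
  refine ⟨hsum i, ?_⟩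
  have hrec := tsum_lyapunovTerm_eq (fun j => (hsum j).of_abs) i
  rw [lyapunovTerm_zero A w i ⟨0, hn⟩] at hrec
  exact hrec

/-- For a Schur stable `A` and weights `w`, the series
`∑_l ∑_r w_r (A^l)_{i₁ r} ⋯ (A^l)_{iₙ r}` converges absolutely, and its sum satisfies
the order-`n` discrete Lyapunov recursion. -/
theorem stmt_1 (n p : ℕ) (hn : 1 ≤ n) (hp : 1 ≤ p)
    (A : Matrix (Fin p) (Fin p) ℝ)
    (hA : ∀ μ ∈ spectrum ℂ (A.map (algebraMap ℝ ℂ)), ‖μ‖ < 1)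
    (w : Fin p → ℝ) (i : Fin n → Fin p) :
    Summable (fun l : ℕ => |∑ r : Fin p, w r * ∏ m : Fin n, (A ^ l) (i m) r|) ∧
    (∑' l : ℕ, ∑ r : Fin p, w r * ∏ m : Fin n, (A ^ l) (i m) r)
      = (∑ j : Fin n → Fin p, (∏ m : Fin n, A (i m) (j m)) *
            ∑' l : ℕ, ∑ r : Fin p, w r * ∏ m : Fin n, (A ^ l) (j m) r)
        + (if ∀ m : Fin n, i m = i ⟨0, hn⟩ then w (i ⟨0, hn⟩) else 0) :=
  stmt_1_general n p hn A hA w i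
end

section
/- Let p ≥ 1, let E be an edge set on V = {0,…,p−1}, let A be an E-supported Schur stable real p×p matrix, let n ≥ 1 and w : V → ℝ. Then for every index tuple (i_1,…,i_n) ∈ V^n, the order-n steady-state cumulant tensor satisfies the trek rule: T_n(A,w)(i_1,…,i_n) = ∑_{l=0}^∞ [ ∑_{τ} w_{top(τ)} · ∏_{m=1}^n (A-weight of f_m) ], where for each l the inner sum is the finite sum over all n-equitreks τ = (f_1,…,f_n) of length l between i_1,…,i_n in (V,E), and the outer series over l converges absolutely. -/
/-!
Expanding each `(A ^ l) (i m) r` as the sum of the `A`-weights of all maps `Fin (l + 1) → Fin p`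
from `r` to `i m` and multiplying out the product over `m` turns the `l`-th term of the cumulant
series into the sum over `n`-tuples of such maps with common top `r`; tuples containing a non-walk
contribute nothing because `A` is `E`-supported. For absolute convergence, Gelfand's formula turns
Schur stability into `‖A ^ l‖ ≤ ρ ^ l` for some `ρ < 1` and all large `l`, so the `l`-th term is
`O(ρ ^ l)`.
-/

open Matrix

/-- The order-`n` steady-state cumulant tensor
`T_n(A,w)(i₁,…,iₙ) = ∑_{l=0}^∞ ∑_{r} w_r (A^l)_{i₁ r} ⋯ (A^l)_{iₙ r}`. -/
noncomputable def steadyCumulant (p n : ℕ) (A : Matrix (Fin p) (Fin p) ℝ)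
    (w : Fin p → ℝ) (i : Fin n → Fin p) : ℝ :=
  ∑' l : ℕ, ∑ r : Fin p, w r * ∏ m : Fin n, (A ^ l) (i m) r

/-- `f` is a walk of length `l` in the directed graph with edge set `E`. -/
def IsWalk {p : ℕ} (E : Finset (Fin p × Fin p)) {l : ℕ} (f : Fin (l + 1) → Fin p) : Prop :=
  ∀ s : Fin l, (f s.castSucc, f s.succ) ∈ E

instance {p : ℕ} (E : Finset (Fin p × Fin p)) {l : ℕ} (f : Fin (l + 1) → Fin p) :
    Decidable (IsWalk E f) :=
  inferInstanceAs (Decidable (∀ s : Fin l, (f s.castSucc, f s.succ) ∈ E))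

/-- The `A`-weight of a walk: the product of the entries `A_{f(s+1) f(s)}`. -/
def walkWeight {p : ℕ} (A : Matrix (Fin p) (Fin p) ℝ) {l : ℕ}
    (f : Fin (l + 1) → Fin p) : ℝ :=
  ∏ s : Fin l, A (f s.succ) (f s.castSucc)

/-- The finite sum over all `n`-equitreks of length `l` between `i₁,…,iₙ` of
`w_{top(τ)}` times the product of the `A`-weights of the `n` walks. -/
noncomputable def equitrekSum (p n : ℕ) (hn : 1 ≤ n) (E : Finset (Fin p × Fin p))
    (A : Matrix (Fin p) (Fin p) ℝ) (w : Fin p → ℝ) (i : Fin n → Fin p) (l : ℕ) : ℝ :=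
  ∑ f : Fin n → Fin (l + 1) → Fin p,
    if (∀ m : Fin n, IsWalk E (f m)) ∧ (∀ m m' : Fin n, f m 0 = f m' 0) ∧
        (∀ m : Fin n, f m (Fin.last l) = i m)
    then w (f ⟨0, hn⟩ 0) * ∏ m : Fin n, walkWeight A (f m)
    else 0

section Walks

variable {p : ℕ} (A : Matrix (Fin p) (Fin p) ℝ)

lemma walkWeight_snoc {l : ℕ} (g : Fin (l + 1) → Fin p) (j : Fin p) :
    walkWeight A (Fin.snoc g j) = walkWeight A g * A j (g (Fin.last l)) := by
  simp [walkWeight, Fin.prod_univ_castSucc, Fin.succ_castSucc, -Fin.castSucc_succ]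

lemma sum_walkWeight_eq_pow (l : ℕ) (r v : Fin p) :
    (∑ f : Fin (l + 1) → Fin p, if f 0 = r ∧ f (Fin.last l) = v then walkWeight A f else 0)
      = (A ^ l) v r := by
  induction l generalizing v with
  | zero =>
    rw [← (Equiv.funUnique (Fin 1) (Fin p)).symm.sum_comp]
    simp [walkWeight, ite_and, Matrix.one_apply, eq_comm]
  | succ l ih =>
    have hsnoc : ∀ (g : Fin (l + 1) → Fin p) j, (Fin.snoc g j : Fin (l + 2) → Fin p) 0 = g 0 :=
      fun g j => Fin.snoc_castSucc (i := 0) ..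
    calc _ = ∑ g : Fin (l + 1) → Fin p,
          if g 0 = r then A v (g (Fin.last l)) * walkWeight A g else 0 := by
          rw [← (Fin.snocEquiv fun _ => Fin p).sum_comp, Fintype.sum_prod_type, Finset.sum_comm]
          simp [Fin.snocEquiv, walkWeight_snoc, hsnoc, ite_and, mul_comm]
      _ = ∑ k : Fin p, A v k * ∑ g : Fin (l + 1) → Fin p,
          if g 0 = r ∧ g (Fin.last l) = k then walkWeight A g else 0 := by
          simp only [ite_and, Finset.mul_sum, mul_ite, mul_zero]
          rw [Finset.sum_comm]
          simp only [Finset.sum_ite_irrel, Finset.sum_ite_eq, Finset.mem_univ, if_true,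
            Finset.sum_const_zero]
      _ = (A ^ (l + 1)) v r := by simp_rw [ih, pow_succ', Matrix.mul_apply]

end Walks

section Equitreks

variable {p : ℕ} {E : Finset (Fin p × Fin p)} (A : Matrix (Fin p) (Fin p) ℝ)

lemma walkWeight_eq_zero_of_not_isWalk (hsupp : ∀ i j : Fin p, (i, j) ∉ E → A j i = 0)
    {l : ℕ} {f : Fin (l + 1) → Fin p} (hf : ¬ IsWalk E f) : walkWeight A f = 0 := by
  obtain ⟨s, hs⟩ := not_forall.mp hf
  exact Finset.prod_eq_zero (Finset.mem_univ s) (hsupp _ _ hs)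

lemma sum_ite_common_top {n : ℕ} (hn : 1 ≤ n) (w : Fin p → ℝ) (i : Fin n → Fin p) {l : ℕ}
    (F : Fin n → Fin (l + 1) → Fin p) (x : ℝ) :
    (∑ r : Fin p, if ∀ m, F m 0 = r ∧ F m (Fin.last l) = i m then w r * x else 0) =
      if (∀ m m', F m 0 = F m' 0) ∧ (∀ m, F m (Fin.last l) = i m) then w (F ⟨0, hn⟩ 0) * x
      else 0 := by
  rw [Fintype.sum_eq_single (F ⟨0, hn⟩ 0) fun r hr => if_neg fun h => hr (h ⟨0, hn⟩).1.symm]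
  refine if_congr ⟨fun h => ⟨fun m m' => (h m).1.trans (h m').1.symm, fun m => (h m).2⟩,
    fun h m => ⟨h.1 m _, h.2 m⟩⟩ rfl rfl

theorem equitrekSum_eq (hsupp : ∀ i j : Fin p, (i, j) ∉ E → A j i = 0) {n : ℕ} (hn : 1 ≤ n)
    (w : Fin p → ℝ) (i : Fin n → Fin p) (l : ℕ) :
    equitrekSum p n hn E A w i l = ∑ r : Fin p, w r * ∏ m : Fin n, (A ^ l) (i m) r := by
  calc equitrekSum p n hn E A w i l
      = ∑ F : Fin n → Fin (l + 1) → Fin p,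
          if (∀ m m', F m 0 = F m' 0) ∧ (∀ m, F m (Fin.last l) = i m)
          then w (F ⟨0, hn⟩ 0) * ∏ m, walkWeight A (F m) else 0 := by
        refine Finset.sum_congr rfl fun F _ => ?_
        by_cases hwalk : ∀ m, IsWalk E (F m)
        · simp only [hwalk, implies_true, true_and]
        · obtain ⟨m, hm⟩ := not_forall.mp hwalk
          simp [Finset.prod_eq_zero (f := fun m => walkWeight A (F m)) (Finset.mem_univ m)
            (walkWeight_eq_zero_of_not_isWalk A hsupp hm), hwalk]
    _ = ∑ r : Fin p, ∑ F : Fin n → Fin (l + 1) → Fin p,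
          if ∀ m, F m 0 = r ∧ F m (Fin.last l) = i m
          then w r * ∏ m, walkWeight A (F m) else 0 := by
        rw [Finset.sum_comm]
        simp only [sum_ite_common_top hn]
    _ = ∑ r : Fin p, w r * ∑ F : Fin n → Fin (l + 1) → Fin p, ∏ m,
          if F m 0 = r ∧ F m (Fin.last l) = i m then walkWeight A (F m) else 0 := by
        simp only [Fintype.prod_ite_zero, Finset.mul_sum, mul_ite, mul_zero]
    _ = ∑ r : Fin p, w r * ∏ m : Fin n, (A ^ l) (i m) r := by
        simp only [← sum_walkWeight_eq_pow A l, Fintype.prod_sum]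

end Equitreks

section SpectralRadius

open Filter

variable {𝔸 : Type*} [NormedRing 𝔸] [NormedAlgebra ℂ 𝔸] [CompleteSpace 𝔸]

lemma spectralRadius_lt_one_of_forall_norm_lt_one {a : 𝔸} (h : ∀ z ∈ spectrum ℂ a, ‖z‖ < 1) :
    spectralRadius ℂ a < 1 := by
  rcases (spectrum ℂ a).eq_empty_or_nonempty with he | hne
  · simp [spectralRadius, he]
  · exact_mod_cast spectrum.spectralRadius_lt_of_forall_lt_of_nonempty hne (r := 1)
      fun z hz => by simpa [← NNReal.coe_lt_coe] using h z hz

lemma exists_norm_pow_le_pow_of_spectralRadius_lt_one {a : 𝔸} (h : spectralRadius ℂ a < 1) :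
    ∃ r : ℝ, 0 ≤ r ∧ r < 1 ∧ ∀ᶠ l in atTop, ‖a ^ l‖ ≤ r ^ l := by
  obtain ⟨c, hac, hc1⟩ := ENNReal.lt_iff_exists_nnreal_btwn.mp h
  refine ⟨c, c.coe_nonneg, by exact_mod_cast hc1, ?_⟩
  filter_upwards [(spectrum.pow_norm_pow_one_div_tendsto_nhds_spectralRadius a).eventually_lt_const
    hac, eventually_ne_atTop 0] with l hl hl0
  rw [ENNReal.ofReal_lt_coe_iff (by positivity)] at hl
  calc ‖a ^ l‖ = (‖a ^ l‖ ^ (1 / l : ℝ)) ^ l := by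
        rw [one_div, Real.rpow_inv_natCast_pow (norm_nonneg _) hl0]
    _ ≤ c ^ l := pow_le_pow_left₀ (by positivity) hl.le l

end SpectralRadius

section LinftyOpNorm

attribute [local instance] Matrix.linftyOpSeminormedAddCommGroup

lemma Matrix.norm_apply_le_linfty_opNorm {m n α : Type*} [Fintype m] [Fintype n]
    [SeminormedAddCommGroup α] (M : Matrix m n α) (a : m) (b : n) : ‖M a b‖ ≤ ‖M‖ := by
  have h1 : ‖M a b‖₊ ≤ ∑ j, ‖M a j‖₊ :=
    Finset.single_le_sum (f := fun j => ‖M a j‖₊) (fun j _ => zero_le) (Finset.mem_univ b)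
  have h2 : (∑ j, ‖M a j‖₊) ≤ ‖M‖₊ := by
    rw [Matrix.linfty_opNNNorm_def]
    exact Finset.le_sup (f := fun i => ∑ j, ‖M i j‖₊) (Finset.mem_univ a)
  exact_mod_cast h1.trans h2

end LinftyOpNorm

section SchurStable

open Filter

attribute [local instance] Matrix.linftyOpNormedRing Matrix.linftyOpNormedAlgebra

lemma Matrix.exists_abs_pow_apply_le_pow {ι : Type*} [Fintype ι] [DecidableEq ι]
    (A : Matrix ι ι ℝ) (hA : ∀ μ ∈ spectrum ℂ (A.map (algebraMap ℝ ℂ)), ‖μ‖ < 1) :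
    ∃ r : ℝ, 0 ≤ r ∧ r < 1 ∧ ∀ᶠ l in atTop, ∀ a b, |(A ^ l) a b| ≤ r ^ l := by
  obtain ⟨r, hr0, hr1, hev⟩ := exists_norm_pow_le_pow_of_spectralRadius_lt_one
    (spectralRadius_lt_one_of_forall_norm_lt_one hA)
  refine ⟨r, hr0, hr1, hev.mono fun l hl a b => ?_⟩
  calc |(A ^ l) a b| = ‖((A.map (algebraMap ℝ ℂ)) ^ l) a b‖ := by
        rw [← Matrix.map_pow, Matrix.map_apply, Complex.coe_algebraMap, Complex.norm_real,
          Real.norm_eq_abs]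
    _ ≤ r ^ l := (Matrix.norm_apply_le_linfty_opNorm _ a b).trans hl

lemma summable_abs_sum_mul_prod_pow_apply {ι κ : Type*} [Fintype ι] [DecidableEq ι] [Fintype κ]
    [Nonempty κ] (A : Matrix ι ι ℝ) (hA : ∀ μ ∈ spectrum ℂ (A.map (algebraMap ℝ ℂ)), ‖μ‖ < 1)
    (w : ι → ℝ) (i : κ → ι) :
    Summable fun l : ℕ => |∑ r, w r * ∏ m, (A ^ l) (i m) r| := by
  obtain ⟨ρ, hρ0, hρ1, hev⟩ := A.exists_abs_pow_apply_le_pow hA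
  refine Summable.of_norm_bounded_eventually
    ((summable_geometric_of_lt_one hρ0 hρ1).mul_left (∑ r, |w r|)) ?_
  rw [Nat.cofinite_eq_atTop]
  filter_upwards [hev] with l hl
  have hprod : ∀ r, |∏ m, (A ^ l) (i m) r| ≤ ρ ^ l := fun r =>
    calc |∏ m, (A ^ l) (i m) r| = ∏ m, |(A ^ l) (i m) r| := Finset.abs_prod _ _
      _ ≤ ∏ _m : κ, ρ ^ l := Finset.prod_le_prod (fun _ _ => abs_nonneg _) fun m _ => hl _ _
      _ = (ρ ^ l) ^ Fintype.card κ := by rw [Finset.prod_const, Finset.card_univ]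
      _ ≤ ρ ^ l := pow_le_of_le_one (by positivity) (pow_le_one₀ hρ0 hρ1.le) Fintype.card_ne_zero
  calc ‖|∑ r, w r * ∏ m, (A ^ l) (i m) r|‖ = |∑ r, w r * ∏ m, (A ^ l) (i m) r| :=
        by rw [Real.norm_eq_abs, abs_abs]
    _ ≤ ∑ r, |w r * ∏ m, (A ^ l) (i m) r| := Finset.abs_sum_le_sum_abs _ _
    _ ≤ ∑ r, |w r| * ρ ^ l := Finset.sum_le_sum fun r _ => by
        rw [abs_mul]
        exact mul_le_mul_of_nonneg_left (hprod r) (abs_nonneg _)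
    _ = (∑ r, |w r|) * ρ ^ l := (Finset.sum_mul _ _ _).symm

end SchurStable

theorem stmt_3_general (p n : ℕ) (hn : 1 ≤ n) (E : Finset (Fin p × Fin p))
    (A : Matrix (Fin p) (Fin p) ℝ)
    (hsupp : ∀ i j : Fin p, (i, j) ∉ E → A j i = 0)
    (hA : ∀ μ ∈ spectrum ℂ (A.map (algebraMap ℝ ℂ)), ‖μ‖ < 1)
    (w : Fin p → ℝ) (i : Fin n → Fin p) :
    Summable (fun l : ℕ => |equitrekSum p n hn E A w i l|) ∧
    steadyCumulant p n A w i = ∑' l : ℕ, equitrekSum p n hn E A w i l := by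
  have : Nonempty (Fin n) := ⟨⟨0, hn⟩⟩
  simp only [equitrekSum_eq A hsupp hn]
  exact ⟨summable_abs_sum_mul_prod_pow_apply A hA w i, rfl⟩

/-- Trek rule: the order-`n` steady-state cumulant of an `E`-supported
Schur stable matrix is the (absolutely convergent) series over `l` of the finite sums
over all `n`-equitreks of length `l`. -/
theorem stmt_3 (p n : ℕ) (hp : 1 ≤ p) (hn : 1 ≤ n) (E : Finset (Fin p × Fin p))
    (A : Matrix (Fin p) (Fin p) ℝ)
    (hsupp : ∀ i j : Fin p, (i, j) ∉ E → A j i = 0)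
    (hA : ∀ μ ∈ spectrum ℂ (A.map (algebraMap ℝ ℂ)), ‖μ‖ < 1)
    (w : Fin p → ℝ) (i : Fin n → Fin p) :
    Summable (fun l : ℕ => |equitrekSum p n hn E A w i l|) ∧
    steadyCumulant p n A w i = ∑' l : ℕ, equitrekSum p n hn E A w i l :=
  stmt_3_general p n hn E A hsupp hA w i
end

section
/- Let p ≥ 1, let E be an edge set on V = {0,…,p−1}, let A be an E-supported Schur stable real p×p matrix, and let i, j ∈ V be two vertices such that there is no equitrek between i and j, i.e. for no l ≥ 0 and no vertex r ∈ V do there exist both a walk of length l from r to i and a walk of length l from r to j in (V,E). Then for every n ≥ 2, every w : V → ℝ, and every index tuple (i_1,…,i_n) ∈ V^n all of whose entries lie in {i,j} and which contains both i and j, one has T_n(A,w)(i_1,…,i_n) = 0. -/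
open Matrix

/-- A nonzero entry of `A ^ l` yields a walk of length `l`. -/
lemma walk_of_pow_ne_zero {p : ℕ} (E : Finset (Fin p × Fin p))
    (A : Matrix (Fin p) (Fin p) ℝ)
    (hsupp : ∀ i j : Fin p, (i, j) ∉ E → A j i = 0) :
    ∀ (l : ℕ) (v r : Fin p), (A ^ l) v r ≠ 0 →
      ∃ f : Fin (l + 1) → Fin p, IsWalk E f ∧ f 0 = r ∧ f (Fin.last l) = v := by
  intro l
  induction l with
  | zero =>
    intro v r h
    rw [pow_zero, Matrix.one_apply] at h
    have hvr : v = r := by by_contra hc; simp [hc] at h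
    exact ⟨fun _ => r, fun s => s.elim0, rfl, hvr.symm⟩
  | succ l ih =>
    intro v r h
    rw [pow_succ, Matrix.mul_apply] at h
    obtain ⟨k, -, hk⟩ := Finset.exists_ne_zero_of_sum_ne_zero h
    have h1 : (A ^ l) v k ≠ 0 := fun hc => hk (by rw [hc, zero_mul])
    have h2 : A k r ≠ 0 := fun hc => hk (by rw [hc, mul_zero])
    have hedge : (r, k) ∈ E := by
      by_contra hc; exact h2 (hsupp r k hc)
    obtain ⟨f, hf, hf0, hfl⟩ := ih v k h1
    refine ⟨Fin.cons r f, ?_, Fin.cons_zero _ _, ?_⟩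
    · intro s
      refine Fin.cases ?_ (fun t => ?_) s
      · simpa [Fin.cons_succ, hf0] using hedge
      · have h1 : (Fin.cons r f : Fin (l + 2) → Fin p) t.succ.castSucc = f t.castSucc := by
          rw [← Fin.succ_castSucc, Fin.cons_succ]
        have h2 : (Fin.cons r f : Fin (l + 2) → Fin p) t.succ.succ = f t.succ := by
          rw [Fin.cons_succ]
        rw [h1, h2]; exact hf t
    · have : Fin.last (l + 1) = (Fin.last l).succ := rfl
      rw [this, Fin.cons_succ, hfl]

/-- If there is no equitrek between `i` and `j` in `(V,E)`, then every
mixed higher-order cumulant of `i` and `j` vanishes. -/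
theorem stmt_5 (p : ℕ) (hp : 1 ≤ p) (E : Finset (Fin p × Fin p))
    (A : Matrix (Fin p) (Fin p) ℝ)
    (hsupp : ∀ i j : Fin p, (i, j) ∉ E → A j i = 0)
    (hA : ∀ μ ∈ spectrum ℂ (A.map (algebraMap ℝ ℂ)), ‖μ‖ < 1)
    (i j : Fin p)
    (hnotrek : ∀ (l : ℕ) (r : Fin p),
      ¬((∃ f : Fin (l + 1) → Fin p, IsWalk E f ∧ f 0 = r ∧ f (Fin.last l) = i) ∧
        (∃ g : Fin (l + 1) → Fin p, IsWalk E g ∧ g 0 = r ∧ g (Fin.last l) = j))) :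
    ∀ (n : ℕ), 2 ≤ n → ∀ (w : Fin p → ℝ) (idx : Fin n → Fin p),
      (∀ m : Fin n, idx m = i ∨ idx m = j) →
      (∃ m : Fin n, idx m = i) → (∃ m : Fin n, idx m = j) →
      steadyCumulant p n A w idx = 0 := by
  intro n hn w idx hall hi hj
  obtain ⟨mi, hmi⟩ := hi
  obtain ⟨mj, hmj⟩ := hj
  unfold steadyCumulant
  have key : ∀ l : ℕ, ∑ r : Fin p, w r * ∏ m : Fin n, (A ^ l) (idx m) r = 0 := by
    intro l
    apply Finset.sum_eq_zero
    intro r _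
    have hprod : ∏ m : Fin n, (A ^ l) (idx m) r = 0 := by
      by_contra h
      have hne : ∀ m : Fin n, (A ^ l) (idx m) r ≠ 0 := fun m hm =>
        h (Finset.prod_eq_zero (Finset.mem_univ m) hm)
      have hni : (A ^ l) i r ≠ 0 := by have := hne mi; rwa [hmi] at this
      have hnj : (A ^ l) j r ≠ 0 := by have := hne mj; rwa [hmj] at this
      exact hnotrek l r ⟨walk_of_pow_ne_zero E A hsupp l i r hni,
        walk_of_pow_ne_zero E A hsupp l j r hnj⟩
    rw [hprod, mul_zero]
  simp only [key, tsum_zero]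
end

section
/- Let p ≥ 2 and consider a directed tree on V = {0,…,p−1} with root 0 and a single self-loop at the root, with associated third-order model Θ and cumulants S, T. Then: (1) for every i ∈ V, one has [for every j ∈ V and every θ ∈ Θ: S_{ij}³·T_{iii}² − S_{ii}³·T_{iij}·T_{ijj} = 0] if and only if i = 0; (2) for all i, j ∈ V, one has [for every θ ∈ Θ: S_{0i}·T_{00j} − S_{0j}·T_{00i} = 0] if and only if level(i) = level(j); (3) for all i, j ∈ V with level(i) ≠ level(j), one has [for every θ ∈ Θ: S_{ij}·T_{00j} − S_{0j}·T_{0ij} = 0] if and only if level(j) > level(i). -/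
open Matrix

/-- `(u,v)` is an edge of the directed tree with parent function `par`, root `r`,
and a single self-loop at the root: `u → v` with `u = par v` for `v ≠ r`, plus the
self-loop `r → r`. -/
def treeEdge {p : ℕ} (par : Fin p → Fin p) (r u v : Fin p) : Prop :=
  (v ≠ r ∧ u = par v) ∨ (u = r ∧ v = r)

/-- Membership in the third-order model parameter space `Θ` of the directed tree:
`A` is supported on the tree edges and Schur stable, `w₂` is entrywise positive
and `w₃` entrywise nonzero. -/
def treeModel {p : ℕ} (par : Fin p → Fin p) (r : Fin p)
    (A : Matrix (Fin p) (Fin p) ℝ) (w₂ w₃ : Fin p → ℝ) : Prop :=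
  (∀ u v : Fin p, ¬treeEdge par r u v → A v u = 0) ∧
  (∀ μ ∈ spectrum ℂ (A.map (algebraMap ℝ ℂ)), ‖μ‖ < 1) ∧
  (∀ i : Fin p, 0 < w₂ i) ∧ (∀ i : Fin p, w₃ i ≠ 0)

/-!
A matrix supported on the tree edges has, in row `v`, a single entry, in column `par v`. Hence
`(A ^ l) v u` vanishes unless `u = par^[l] v`, and once a path has reached the root it only
collects powers of `a = A r r`. If the paths of the indices `i₁, …, iₙ` first meet after `L`
steps, at the root, only the terms with `l ≥ L` survive in the series defining the cumulant, and
they form a geometric series: the cumulant is `w r * ∏ₘ (A ^ L) iₘ r / (1 - a ^ n)`. Under the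
level conditions of the theorem this closed form makes the three relations polynomial identities.

Conversely, put weight `1/2` on every tree edge. Every tree-supported matrix has spectrum in
`{0, A r r}`, so this is a point of the model, and there, writing `ℓ` for the level, the
relations of (2) and (3) become nonzero multiples of `2^{-(2ℓᵢ + 3ℓⱼ)} - 2^{-(2ℓⱼ + 3ℓᵢ)}`,
which vanishes only if `ℓᵢ = ℓⱼ`.
For (1) take `j = r` and double `w₃` at `i ≠ r`: only the diagonal cumulant `T i i i` sees this
weight, because the path of `i` never returns to `i`, and the relation becomes a nonzero
multiple of `2^{-6ℓᵢ}`.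
-/

section Level

variable {ι : Type*} [DecidableEq ι] {par : ι → ι} {r : ι}
  (hroot : par r = r) (hreach : ∀ i, ∃ n, par^[n] i = r)

theorem level_eq_zero_iff {i : ι} : Nat.find (hreach i) = 0 ↔ i = r :=
  Nat.find_eq_zero _

theorem level_root : Nat.find (hreach r) = 0 := (level_eq_zero_iff hreach).mpr rfl

include hroot

theorem iterate_eq_root_iff {i : ι} {l : ℕ} : par^[l] i = r ↔ Nat.find (hreach i) ≤ l := by
  refine ⟨Nat.find_min' (hreach i), fun h => ?_⟩
  rw [← Nat.sub_add_cancel h, Function.iterate_add_apply, Nat.find_spec (hreach i),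
    Function.iterate_fixed hroot]

theorem level_iterate (i : ι) (l : ℕ) :
    Nat.find (hreach (par^[l] i)) = Nat.find (hreach i) - l := by
  have key : ∀ m, par^[m] (par^[l] i) = r ↔ Nat.find (hreach i) - l ≤ m := fun m => by
    rw [← Function.iterate_add_apply, iterate_eq_root_iff hroot hreach]
    omega
  exact le_antisymm (Nat.find_min' _ ((key _).mpr le_rfl)) ((key _).mp (Nat.find_spec (hreach _)))

theorem iterate_ne_iterate_of_level_lt {i j : ι} {l : ℕ}
    (hij : Nat.find (hreach i) < Nat.find (hreach j)) (hl : l < Nat.find (hreach j)) :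
    par^[l] i ≠ par^[l] j := fun h => by
  have := congrArg (fun k => Nat.find (hreach k)) h
  simp only [level_iterate hroot hreach] at this
  omega

include hreach in
theorem iterate_ne_self {i : ι} (hi : i ≠ r) {l : ℕ} (hl : l ≠ 0) : par^[l] i ≠ i := fun h => by
  have := congrArg (fun k => Nat.find (hreach k)) h
  simp only [level_iterate hroot hreach] at this
  exact hi ((level_eq_zero_iff hreach).mp (by omega))

end Level

def IsParentSupported {ι R : Type*} [Zero R] (par : ι → ι) (M : Matrix ι ι R) : Prop :=
  ∀ v u, u ≠ par v → M v u = 0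

theorem IsParentSupported.map {ι R S : Type*} [Semiring R] [Semiring S] {par : ι → ι}
    {M : Matrix ι ι R} (hM : IsParentSupported par M) (f : R →+* S) :
    IsParentSupported par (M.map f) :=
  fun v u h => by rw [map_apply, hM v u h, map_zero]

namespace IsParentSupported

variable {ι R : Type*} [Fintype ι] {par : ι → ι}

section Semiring

variable [Semiring R] {M : Matrix ι ι R} (hM : IsParentSupported par M)
include hM

theorem mul_apply (N : Matrix ι ι R) (j u : ι) : (M * N) j u = M j (par j) * N (par j) u := by
  rw [Matrix.mul_apply, Finset.sum_eq_single (par j) (fun k _ hk => by rw [hM j k hk, zero_mul])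
    (fun h => absurd (Finset.mem_univ _) h)]

theorem mulVec_apply (v : ι → R) (j : ι) : (M *ᵥ v) j = M j (par j) * v (par j) := by
  rw [Matrix.mulVec, dotProduct, Finset.sum_eq_single (par j)
    (fun k _ hk => by rw [hM j k hk, zero_mul]) (fun h => absurd (Finset.mem_univ _) h)]

variable [DecidableEq ι]

theorem pow_apply_eq_zero {l : ℕ} {j u : ι} (h : u ≠ par^[l] j) : (M ^ l) j u = 0 := by
  induction l generalizing j with
  | zero => exact one_apply_ne' h
  | succ l ih => rw [pow_succ', hM.mul_apply, ih h, mul_zero]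

theorem pow_add_apply (k l : ℕ) (j u : ι) :
    (M ^ (k + l)) j u = (M ^ k) j (par^[k] j) * (M ^ l) (par^[k] j) u := by
  rw [pow_add, Matrix.mul_apply, Finset.sum_eq_single (par^[k] j)
    (fun v _ hv => by rw [hM.pow_apply_eq_zero hv, zero_mul])
    (fun h => absurd (Finset.mem_univ _) h)]

theorem pow_apply_self_of_fixed {r : ι} (hr : par r = r) (l : ℕ) :
    (M ^ l) r r = M r r ^ l := by
  induction l with
  | zero => simp
  | succ l ih => rw [pow_succ', hM.mul_apply, hr, ih, pow_succ']

end Semiring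

section Field

variable [DecidableEq ι] {K : Type*} [Field K] {M : Matrix ι ι K} (hM : IsParentSupported par M)
  {r : ι} (hroot : par r = r)
include hM hroot

theorem diag_root_mem_spectrum : M r r ∈ spectrum K M := by
  rw [spectrum.mem_iff, Matrix.isUnit_iff_isUnit_det, isUnit_iff_ne_zero, not_not]
  refine det_eq_zero_of_row_eq_zero r fun u => ?_
  by_cases hu : u = r
  · simp [hu, algebraMap_matrix_apply]
  · simp [algebraMap_matrix_apply, Ne.symm hu, hM r u (by rwa [hroot])]

theorem eq_zero_or_eq_diag_root_of_mem_spectrum (hreach : ∀ i, ∃ n, par^[n] i = r) {μ : K}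
    (hμ : μ ∈ spectrum K M) : μ = 0 ∨ μ = M r r := by
  by_contra! hne
  rw [← spectrum_toLin', ← Module.End.hasEigenvalue_iff_mem_spectrum] at hμ
  obtain ⟨v, hv⟩ := hμ.exists_hasEigenvector
  have hrow : ∀ j, μ * v j = M j (par j) * v (par j) := fun j => by
    rw [← hM.mulVec_apply, ← toLin'_apply, hv.apply_eq_smul, Pi.smul_apply, smul_eq_mul]
  -- `μ ≠ M r r` kills the root coordinate, and `μ ≠ 0` propagates this down the tree.
  have hvanish : ∀ n j, Nat.find (hreach j) ≤ n → v j = 0 := by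
    intro n
    induction n with
    | zero =>
      intro j hj
      obtain rfl := (level_eq_zero_iff hreach).mp (Nat.le_zero.mp hj)
      have := hrow j
      rw [hroot] at this
      exact (mul_eq_zero.mp (by linear_combination this)).resolve_left (sub_ne_zero.mpr hne.2)
    | succ n ih =>
      intro j hj
      have hpar := level_iterate hroot hreach j 1
      rw [Function.iterate_one] at hpar
      have := hrow j
      rw [ih (par j) (by omega), mul_zero] at this
      exact (mul_eq_zero.mp this).resolve_left hne.1
  exact hv.2 (funext fun j => hvanish _ j le_rfl)

end Field

end IsParentSupported

def parentMatrix {ι R : Type*} [DecidableEq ι] [Zero R] (par : ι → ι) (c : R) : Matrix ι ι R :=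
  Matrix.of fun v u => if u = par v then c else 0

theorem isParentSupported_parentMatrix {ι R : Type*} [DecidableEq ι] [Zero R] {par : ι → ι}
    {c : R} : IsParentSupported par (parentMatrix par c) :=
  fun _ _ h => if_neg h

theorem parentMatrix_pow_apply_iterate {ι R : Type*} [Fintype ι] [DecidableEq ι] [Semiring R]
    {par : ι → ι} {c : R} (l : ℕ) (j : ι) : (parentMatrix par c ^ l) j (par^[l] j) = c ^ l := by
  induction l generalizing j with
  | zero => simp
  | succ l ih =>
    rw [pow_succ', isParentSupported_parentMatrix.mul_apply, Function.iterate_succ_apply, ih,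
      parentMatrix, of_apply, if_pos rfl, pow_succ']

section TreeModel

variable {p : ℕ} {par : Fin p → Fin p} {r : Fin p} (hroot : par r = r)
include hroot

theorem treeEdge_iff {u v : Fin p} : treeEdge par r u v ↔ u = par v := by
  constructor
  · rintro (⟨-, h⟩ | ⟨rfl, rfl⟩)
    exacts [h, hroot.symm]
  · intro h
    by_cases hv : v = r
    · exact Or.inr ⟨by rw [h, hv, hroot], hv⟩
    · exact Or.inl ⟨hv, h⟩

theorem treeModel.isParentSupported {A : Matrix (Fin p) (Fin p) ℝ} {w₂ w₃ : Fin p → ℝ}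
    (hθ : treeModel par r A w₂ w₃) : IsParentSupported par A :=
  fun v u h => hθ.1 u v (by rwa [treeEdge_iff hroot])

theorem treeModel.abs_root_lt_one {A : Matrix (Fin p) (Fin p) ℝ} {w₂ w₃ : Fin p → ℝ}
    (hθ : treeModel par r A w₂ w₃) : |A r r| < 1 := by
  have hmem := ((hθ.isParentSupported hroot).map (algebraMap ℝ ℂ)).diag_root_mem_spectrum hroot
  simpa using hθ.2.1 _ hmem

theorem treeModel_parentMatrix (hreach : ∀ i, ∃ n, par^[n] i = r) {c : ℝ} (hc : |c| < 1)
    {w₂ w₃ : Fin p → ℝ} (hw₂ : ∀ i, 0 < w₂ i) (hw₃ : ∀ i, w₃ i ≠ 0) :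
    treeModel par r (parentMatrix par c) w₂ w₃ := by
  refine ⟨fun u v h => if_neg (by rwa [treeEdge_iff hroot] at h), fun μ hμ => ?_, hw₂, hw₃⟩
  have hW := (isParentSupported_parentMatrix (par := par) (c := c)).map (algebraMap ℝ ℂ)
  rcases hW.eq_zero_or_eq_diag_root_of_mem_spectrum hroot hreach hμ with rfl | rfl
  · simp
  · simpa [parentMatrix, hroot] using hc

end TreeModel

theorem abs_pow_lt_one {x : ℝ} (hx : |x| < 1) {n : ℕ} (hn : n ≠ 0) : |x ^ n| < 1 := by
  rw [abs_pow]
  exact pow_lt_one₀ (abs_nonneg x) hx hn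

theorem tsum_eq_div_of_eq_geometric_of_ge {f : ℕ → ℝ} {L : ℕ} {C q : ℝ} (hq : |q| < 1)
    (hlt : ∀ l < L, f l = 0) (hge : ∀ k, f (k + L) = C * q ^ k) : ∑' l, f l = C / (1 - q) := by
  have hgeom : HasSum (fun k => f (k + L)) (C / (1 - q)) := by
    simpa only [hge, div_eq_mul_inv] using (hasSum_geometric_of_abs_lt_one hq).mul_left C
  refine ((hasSum_nat_add_iff' L).mp ?_).tsum_eq
  rwa [Finset.sum_eq_zero fun l hl => hlt l (Finset.mem_range.mp hl), sub_zero]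

def PathsMeetAtRoot {ι : Type*} (par : ι → ι) (r : ι) {n : ℕ} (i : Fin n → ι) (L : ℕ) : Prop :=
  (∀ m, par^[L] (i m) = r) ∧ ∀ l < L, ∃ m m', par^[l] (i m) ≠ par^[l] (i m')

namespace PathsMeetAtRoot

variable {ι : Type*} [DecidableEq ι] {par : ι → ι} {r : ι} (hroot : par r = r)
  (hreach : ∀ i, ∃ n, par^[n] i = r) {n : ℕ} {i : Fin n → ι} {m₀ m₁ : Fin n}
  (hle : ∀ m, Nat.find (hreach (i m)) ≤ Nat.find (hreach (i m₁)))
include hroot hle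

theorem of_root_mem (h₀ : i m₀ = r) : PathsMeetAtRoot par r i (Nat.find (hreach (i m₁))) := by
  refine ⟨fun m => (iterate_eq_root_iff hroot hreach).mpr (hle m), fun l hl => ⟨m₀, m₁, ?_⟩⟩
  rw [h₀, Function.iterate_fixed hroot, ne_comm, Ne, iterate_eq_root_iff hroot hreach]
  exact Nat.not_le.mpr hl

theorem of_level_lt (hlt : Nat.find (hreach (i m₀)) < Nat.find (hreach (i m₁))) :
    PathsMeetAtRoot par r i (Nat.find (hreach (i m₁))) :=
  ⟨fun m => (iterate_eq_root_iff hroot hreach).mpr (hle m),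
    fun _ hl => ⟨m₀, m₁, iterate_ne_iterate_of_level_lt hroot hreach hlt hl⟩⟩

end PathsMeetAtRoot

section Cumulant

variable {p n : ℕ} [NeZero n] {par : Fin p → Fin p} {r : Fin p} (hroot : par r = r)
  {i : Fin n → Fin p} {L : ℕ} (hi : PathsMeetAtRoot par r i L) (w : Fin p → ℝ)
include hroot hi

theorem IsParentSupported.steadyCumulant_eq {A : Matrix (Fin p) (Fin p) ℝ}
    (hA : IsParentSupported par A) (ha : |A r r| < 1) :
    steadyCumulant p n A w i = w r * (∏ m, (A ^ L) (i m) r) / (1 - A r r ^ n) := by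
  unfold steadyCumulant
  apply tsum_eq_div_of_eq_geometric_of_ge (abs_pow_lt_one ha (NeZero.ne n))
  · intro l hl
    refine Finset.sum_eq_zero fun u _ => ?_
    obtain ⟨m, m', hne⟩ := hi.2 l hl
    obtain ⟨m₀, hm₀⟩ : ∃ m₀, u ≠ par^[l] (i m₀) := by
      by_cases hu : u = par^[l] (i m)
      exacts [⟨m', hu ▸ hne⟩, ⟨m, hu⟩]
    rw [Finset.prod_eq_zero (Finset.mem_univ m₀) (hA.pow_apply_eq_zero hm₀), mul_zero]
  · intro k
    have hcol : ∀ j, par^[L] j = r → (A ^ (k + L)) j r = (A ^ L) j r * A r r ^ k := fun j hj => by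
      rw [add_comm, hA.pow_add_apply, hj, hA.pow_apply_self_of_fixed hroot]
    rw [Finset.sum_eq_single r (fun u _ hu => ?_) (fun h => absurd (Finset.mem_univ r) h)]
    · rw [Finset.prod_congr rfl fun m _ => hcol _ (hi.1 m), Finset.prod_mul_distrib,
        Finset.prod_const, Finset.card_univ, Fintype.card_fin, ← pow_mul, mul_comm k, pow_mul,
        mul_assoc]
    · have : u ≠ par^[k + L] (i 0) := by
        rwa [Function.iterate_add_apply, hi.1, Function.iterate_fixed hroot]
      rw [Finset.prod_eq_zero (Finset.mem_univ (0 : Fin n)) (hA.pow_apply_eq_zero this), mul_zero]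

theorem steadyCumulant_parentMatrix {c : ℝ} (hc : |c| < 1) :
    steadyCumulant p n (parentMatrix par c) w i = w r * (c ^ L) ^ n / (1 - c ^ n) := by
  have hroot_entry : parentMatrix par c r r = c := by simp [parentMatrix, hroot]
  have hcol : ∀ m, (parentMatrix par c ^ L) (i m) r = c ^ L := fun m => by
    rw [← hi.1 m]
    exact parentMatrix_pow_apply_iterate L (i m)
  rw [isParentSupported_parentMatrix.steadyCumulant_eq hroot hi w (by rwa [hroot_entry])]
  simp only [hcol, Finset.prod_const, Finset.card_univ, Fintype.card_fin, hroot_entry]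

end Cumulant

section ConstantIndex

variable {p n : ℕ} [NeZero n] {par : Fin p → Fin p} {c : ℝ} {i : Fin n → Fin p} {k : Fin p}
  (hi : ∀ m, i m = k)
include hi

theorem steadyCumulant_parentMatrix_of_forall_eq (w : Fin p → ℝ) :
    steadyCumulant p n (parentMatrix par c) w i = ∑' l, w (par^[l] k) * (c ^ n) ^ l := by
  refine tsum_congr fun l => ?_
  rw [Finset.sum_eq_single (par^[l] k) (fun u _ hu => ?_) (fun h => absurd (Finset.mem_univ _) h)]
  · simp only [hi, parentMatrix_pow_apply_iterate, Finset.prod_const, Finset.card_univ,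
      Fintype.card_fin, ← pow_mul, mul_comm l n]
  · rw [Finset.prod_eq_zero (Finset.mem_univ (0 : Fin n))
      (isParentSupported_parentMatrix.pow_apply_eq_zero (hi 0 ▸ hu)), mul_zero]

theorem steadyCumulant_parentMatrix_one_of_forall_eq (hc : |c| < 1) :
    steadyCumulant p n (parentMatrix par c) (fun _ => 1) i = (1 - c ^ n)⁻¹ := by
  rw [steadyCumulant_parentMatrix_of_forall_eq hi]
  simp only [one_mul]
  exact tsum_geometric_of_abs_lt_one (abs_pow_lt_one hc (NeZero.ne n))

theorem steadyCumulant_parentMatrix_ite_of_forall_eq {r : Fin p} (hroot : par r = r)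
    (hreach : ∀ i, ∃ n, par^[n] i = r) (hk : k ≠ r) {b : ℝ} (hc : |c| < 1) :
    steadyCumulant p n (parentMatrix par c) (fun u => if u = k then b else 1) i
      = b + c ^ n * (1 - c ^ n)⁻¹ := by
  have hq := abs_pow_lt_one hc (NeZero.ne n)
  have htail : ∀ l, (if par^[l + 1] k = k then b else 1) * (c ^ n) ^ (l + 1)
      = c ^ n * (c ^ n) ^ l := fun l => by
    rw [if_neg (iterate_ne_self hroot hreach hk l.succ_ne_zero), one_mul, pow_succ']
  rw [steadyCumulant_parentMatrix_of_forall_eq hi, tsum_eq_zero_add'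
    (by simpa only [htail] using (summable_geometric_of_abs_lt_one hq).mul_left _)]
  simp only [htail, tsum_mul_left, tsum_geometric_of_abs_lt_one hq, Function.iterate_zero, id_eq,
    ↓reduceIte, pow_zero, mul_one]

end ConstantIndex

theorem abs_inv_two_lt_one : |(2⁻¹ : ℝ)| < 1 := by norm_num [abs_of_pos]

theorem eq_of_half_pow_sq_mul_cube {a b : ℕ}
    (h : ((2⁻¹ : ℝ) ^ a) ^ 2 * ((2⁻¹ : ℝ) ^ b) ^ 3 = ((2⁻¹ : ℝ) ^ b) ^ 2 * ((2⁻¹ : ℝ) ^ a) ^ 3) :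
    a = b := by
  simp only [← pow_mul, ← pow_add] at h
  have := pow_right_injective₀ (by norm_num : (0 : ℝ) < 2⁻¹) (by norm_num) h
  omega

section Relations

variable {p : ℕ} {par : Fin p → Fin p} {r : Fin p} (hroot : par r = r)
  (hreach : ∀ i, ∃ n, par^[n] i = r)
include hroot hreach

theorem pathsMeetAtRoot_root_pair (k : Fin p) :
    PathsMeetAtRoot (n := 2) par r ![r, k] (Nat.find (hreach k)) :=
  .of_root_mem hroot hreach (m₀ := 0) (m₁ := 1)
    (fun m => by fin_cases m; exacts [(level_root hreach).trans_le (Nat.zero_le _), le_rfl]) rfl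

theorem pathsMeetAtRoot_root_triple {j k : Fin p}
    (hjk : Nat.find (hreach j) ≤ Nat.find (hreach k)) :
    PathsMeetAtRoot (n := 3) par r ![r, j, k] (Nat.find (hreach k)) :=
  .of_root_mem hroot hreach (m₀ := 0) (m₁ := 2)
    (fun m => by fin_cases m; exacts [(level_root hreach).trans_le (Nat.zero_le _), hjk, le_rfl])
    rfl

theorem parentMatrix_relation_ne_zero {i : Fin p} (hi : i ≠ r) :
    steadyCumulant p 2 (parentMatrix par 2⁻¹) (fun _ => 1) ![i, r] ^ 3
        * steadyCumulant p 3 (parentMatrix par 2⁻¹) (fun k => if k = i then 2 else 1) ![i, i, i] ^ 2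
      - steadyCumulant p 2 (parentMatrix par 2⁻¹) (fun _ => 1) ![i, i] ^ 3
        * steadyCumulant p 3 (parentMatrix par 2⁻¹) (fun k => if k = i then 2 else 1) ![i, i, r]
        * steadyCumulant p 3 (parentMatrix par 2⁻¹) (fun k => if k = i then 2 else 1) ![i, r, r]
      ≠ 0 := by
  have h0 := (level_root hreach).trans_le (Nat.zero_le (Nat.find (hreach i)))
  have hir : PathsMeetAtRoot (n := 2) par r ![i, r] (Nat.find (hreach i)) :=
    .of_root_mem hroot hreach (m₀ := 1) (m₁ := 0)
      (fun m => by fin_cases m; exacts [le_rfl, h0]) rfl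
  have hiir : PathsMeetAtRoot (n := 3) par r ![i, i, r] (Nat.find (hreach i)) :=
    .of_root_mem hroot hreach (m₀ := 2) (m₁ := 0)
      (fun m => by fin_cases m; exacts [le_rfl, le_rfl, h0]) rfl
  have hirr : PathsMeetAtRoot (n := 3) par r ![i, r, r] (Nat.find (hreach i)) :=
    .of_root_mem hroot hreach (m₀ := 1) (m₁ := 0)
      (fun m => by fin_cases m; exacts [le_rfl, h0, h0]) rfl
  rw [steadyCumulant_parentMatrix hroot hir _ abs_inv_two_lt_one,
    steadyCumulant_parentMatrix hroot hiir _ abs_inv_two_lt_one,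
    steadyCumulant_parentMatrix hroot hirr _ abs_inv_two_lt_one,
    steadyCumulant_parentMatrix_one_of_forall_eq (k := i) (fun m => by fin_cases m <;> rfl)
      abs_inv_two_lt_one,
    steadyCumulant_parentMatrix_ite_of_forall_eq (fun m => by fin_cases m <;> rfl) hroot hreach hi
      abs_inv_two_lt_one, if_neg (Ne.symm hi)]
  intro hval
  -- `1472 / 189 = (4/3)^3 * ((15/7)^2 - (8/7)^2)`: with `x = 2^{-ℓᵢ}` the relation is that
  -- multiple of `x ^ 6`, since `S i i = 4/3`, `T i i i = 2 + 1/7` and `T i i r = T i r r`.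
  have : ((2⁻¹ : ℝ) ^ Nat.find (hreach i)) ^ 6 = 0 := by
    linear_combination (189 / 1472 : ℝ) * hval
  simp at this

theorem forall_treeModel_vanishes_iff_eq_root (i : Fin p) :
    (∀ (j : Fin p) (A : Matrix (Fin p) (Fin p) ℝ) (w₂ w₃ : Fin p → ℝ), treeModel par r A w₂ w₃ →
        steadyCumulant p 2 A w₂ ![i, j] ^ 3 * steadyCumulant p 3 A w₃ ![i, i, i] ^ 2
          - steadyCumulant p 2 A w₂ ![i, i] ^ 3 * steadyCumulant p 3 A w₃ ![i, i, j]
            * steadyCumulant p 3 A w₃ ![i, j, j] = 0)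
      ↔ i = r := by
  constructor
  · intro h
    by_contra hi
    exact parentMatrix_relation_ne_zero hroot hreach hi (h r _ _ _
      (treeModel_parentMatrix hroot hreach abs_inv_two_lt_one (fun _ => one_pos)
        (fun k => by positivity)))
  · intro hi j A w₂ w₃ hθ
    subst i
    have hA := hθ.isParentSupported hroot
    have ha := hθ.abs_root_lt_one hroot
    have hr := level_root hreach
    rw [hA.steadyCumulant_eq hroot (pathsMeetAtRoot_root_pair hroot hreach j) _ ha,
      hA.steadyCumulant_eq hroot (pathsMeetAtRoot_root_pair hroot hreach r) _ ha,
      hA.steadyCumulant_eq hroot (pathsMeetAtRoot_root_triple hroot hreach (j := r) le_rfl) _ ha,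
      hA.steadyCumulant_eq hroot
        (pathsMeetAtRoot_root_triple hroot hreach (k := j) (hr.trans_le (Nat.zero_le _))) _ ha,
      hA.steadyCumulant_eq hroot (pathsMeetAtRoot_root_triple hroot hreach (j := j) le_rfl) _ ha]
    simp only [Fin.prod_univ_two, Fin.prod_univ_three, Matrix.cons_val_zero, Matrix.cons_val_one,
      Matrix.cons_val_two, Matrix.head_cons, Matrix.tail_cons]
    simp only [hr, pow_zero, one_apply_eq]
    ring

theorem forall_treeModel_vanishes_iff_level_eq (i j : Fin p) :
    (∀ (A : Matrix (Fin p) (Fin p) ℝ) (w₂ w₃ : Fin p → ℝ), treeModel par r A w₂ w₃ →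
        steadyCumulant p 2 A w₂ ![r, i] * steadyCumulant p 3 A w₃ ![r, r, j]
          - steadyCumulant p 2 A w₂ ![r, j] * steadyCumulant p 3 A w₃ ![r, r, i] = 0)
      ↔ Nat.find (hreach i) = Nat.find (hreach j) := by
  have hpair := pathsMeetAtRoot_root_pair hroot hreach
  have htriple : ∀ k, PathsMeetAtRoot (n := 3) par r ![r, r, k] (Nat.find (hreach k)) := fun k =>
    pathsMeetAtRoot_root_triple hroot hreach ((level_root hreach).trans_le (Nat.zero_le _))
  constructor
  · intro h
    have hval := h _ _ _ (treeModel_parentMatrix hroot hreach abs_inv_two_lt_one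
      (fun _ => one_pos) (fun _ => one_ne_zero))
    simp only [steadyCumulant_parentMatrix hroot (hpair _) _ abs_inv_two_lt_one,
      steadyCumulant_parentMatrix hroot (htriple _) _ abs_inv_two_lt_one] at hval
    -- `(1 - 1/4) * (1 - 1/8) = 21/32`
    exact eq_of_half_pow_sq_mul_cube (by linear_combination (21 / 32 : ℝ) * hval)
  · intro hij A w₂ w₃ hθ
    have hA := hθ.isParentSupported hroot
    have ha := hθ.abs_root_lt_one hroot
    simp only [hA.steadyCumulant_eq hroot (hpair _) _ ha,
      hA.steadyCumulant_eq hroot (htriple _) _ ha, hij, Fin.prod_univ_two, Fin.prod_univ_three, Matrix.cons_val_zero, Matrix.cons_val_one,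
      Matrix.cons_val_two, Matrix.head_cons, Matrix.tail_cons]
    ring

theorem forall_treeModel_vanishes_iff_level_lt (i j : Fin p)
    (hij : Nat.find (hreach i) ≠ Nat.find (hreach j)) :
    (∀ (A : Matrix (Fin p) (Fin p) ℝ) (w₂ w₃ : Fin p → ℝ), treeModel par r A w₂ w₃ →
        steadyCumulant p 2 A w₂ ![i, j] * steadyCumulant p 3 A w₃ ![r, r, j]
          - steadyCumulant p 2 A w₂ ![r, j] * steadyCumulant p 3 A w₃ ![r, i, j] = 0)
      ↔ Nat.find (hreach i) < Nat.find (hreach j) := by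
  have h0 := (level_root hreach).trans_le (Nat.zero_le (Nat.find (hreach j)))
  constructor
  · intro h
    by_contra hge
    have hji : Nat.find (hreach j) < Nat.find (hreach i) := by omega
    have hval := h _ _ _ (treeModel_parentMatrix hroot hreach abs_inv_two_lt_one
      (fun _ => one_pos) (fun _ => one_ne_zero))
    have hij' : PathsMeetAtRoot (n := 2) par r ![i, j] (Nat.find (hreach i)) :=
      .of_level_lt hroot hreach (m₀ := 1) (m₁ := 0)
        (fun m => by fin_cases m; exacts [le_rfl, hji.le]) hji
    have hrij : PathsMeetAtRoot (n := 3) par r ![r, i, j] (Nat.find (hreach i)) :=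
      .of_root_mem hroot hreach (m₀ := 0) (m₁ := 1)
        (fun m => by fin_cases m; exacts [h0.trans hji.le, le_rfl, hji.le]) rfl
    rw [steadyCumulant_parentMatrix hroot hij' _ abs_inv_two_lt_one,
      steadyCumulant_parentMatrix hroot (pathsMeetAtRoot_root_triple hroot hreach h0) _
        abs_inv_two_lt_one,
      steadyCumulant_parentMatrix hroot (pathsMeetAtRoot_root_pair hroot hreach j) _
        abs_inv_two_lt_one,
      steadyCumulant_parentMatrix hroot hrij _ abs_inv_two_lt_one] at hval
    exact hij (eq_of_half_pow_sq_mul_cube (by linear_combination (21 / 32 : ℝ) * hval))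
  · intro hlt A w₂ w₃ hθ
    have hA := hθ.isParentSupported hroot
    have ha := hθ.abs_root_lt_one hroot
    have hij' : PathsMeetAtRoot (n := 2) par r ![i, j] (Nat.find (hreach j)) :=
      .of_level_lt hroot hreach (m₀ := 0) (m₁ := 1)
        (fun m => by fin_cases m; exacts [hlt.le, le_rfl]) hlt
    rw [hA.steadyCumulant_eq hroot hij' _ ha,
      hA.steadyCumulant_eq hroot (pathsMeetAtRoot_root_triple hroot hreach h0) _ ha,
      hA.steadyCumulant_eq hroot (pathsMeetAtRoot_root_pair hroot hreach j) _ ha,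
      hA.steadyCumulant_eq hroot (pathsMeetAtRoot_root_triple hroot hreach hlt.le) _ ha]
    simp only [Fin.prod_univ_two, Fin.prod_univ_three, Matrix.cons_val_zero, Matrix.cons_val_one,
      Matrix.cons_val_two, Matrix.head_cons, Matrix.tail_cons]
    ring

end Relations

/-- Level recovery from the vanishing ideal for a directed tree with
root `0` and a single self-loop at the root. -/
theorem stmt_12 (p : ℕ) (hp : 2 ≤ p) (par : Fin p → Fin p)
    (hroot : par ⟨0, by omega⟩ = ⟨0, by omega⟩)
    (hreach : ∀ i : Fin p, ∃ n : ℕ, par^[n] i = ⟨0, by omega⟩) :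
    -- (1)
    (∀ i : Fin p,
      (∀ (j : Fin p) (A : Matrix (Fin p) (Fin p) ℝ) (w₂ w₃ : Fin p → ℝ),
        treeModel par ⟨0, by omega⟩ A w₂ w₃ →
        (steadyCumulant p 2 A w₂ ![i, j]) ^ 3 * (steadyCumulant p 3 A w₃ ![i, i, i]) ^ 2
          - (steadyCumulant p 2 A w₂ ![i, i]) ^ 3 *
            (steadyCumulant p 3 A w₃ ![i, i, j]) *
            (steadyCumulant p 3 A w₃ ![i, j, j]) = 0)
        ↔ i = ⟨0, by omega⟩) ∧
    -- (2)
    (∀ i j : Fin p,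
      (∀ (A : Matrix (Fin p) (Fin p) ℝ) (w₂ w₃ : Fin p → ℝ),
        treeModel par ⟨0, by omega⟩ A w₂ w₃ →
        (steadyCumulant p 2 A w₂ ![⟨0, by omega⟩, i]) *
            (steadyCumulant p 3 A w₃ ![⟨0, by omega⟩, ⟨0, by omega⟩, j])
          - (steadyCumulant p 2 A w₂ ![⟨0, by omega⟩, j]) *
            (steadyCumulant p 3 A w₃ ![⟨0, by omega⟩, ⟨0, by omega⟩, i]) = 0)
        ↔ Nat.find (hreach i) = Nat.find (hreach j)) ∧
    -- (3)
    (∀ i j : Fin p, Nat.find (hreach i) ≠ Nat.find (hreach j) →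
      ((∀ (A : Matrix (Fin p) (Fin p) ℝ) (w₂ w₃ : Fin p → ℝ),
        treeModel par ⟨0, by omega⟩ A w₂ w₃ →
        (steadyCumulant p 2 A w₂ ![i, j]) *
            (steadyCumulant p 3 A w₃ ![⟨0, by omega⟩, ⟨0, by omega⟩, j])
          - (steadyCumulant p 2 A w₂ ![⟨0, by omega⟩, j]) *
            (steadyCumulant p 3 A w₃ ![⟨0, by omega⟩, i, j]) = 0)
        ↔ Nat.find (hreach i) < Nat.find (hreach j))) :=
  ⟨forall_treeModel_vanishes_iff_eq_root hroot hreach,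
    forall_treeModel_vanishes_iff_level_eq hroot hreach,
    forall_treeModel_vanishes_iff_level_lt hroot hreach⟩
end

section
/- Let p ≥ 1, let E be an edge set on V = {0,…,p−1}, let A be an E-supported real p×p matrix, let D be a diagonal real p×p matrix, and let S be a real p×p matrix satisfying S = A S Aᵀ + D. Let U ⊆ V and let pa(U) = {u ∈ V : (u,v) ∈ E for some v ∈ U}. Then the submatrix of S with rows indexed by V∖U and columns indexed by U has rank at most |pa(U)|. Moreover, if Ω : V×V×V → ℝ is a diagonal 3-tensor (Ω_{abc} = 0 unless a = b = c) and T : V×V×V → ℝ satisfies T_{abc} = ∑_{l,m,n∈V} A_{al} A_{bm} A_{cn} T_{lmn} + Ω_{abc} for all a,b,c, then for every i ∈ V the matrix with columns indexed by U, rows indexed by V if i ∉ U and by V∖{i} if i ∈ U, and entries T_{ijv} in row j and column v, has rank at most |pa(U)|. -/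
open Matrix

lemma stmt15_aux {m n o : Type*} [Fintype m] [Fintype n] [Fintype o]
    (M : Matrix m n ℝ) (B : Matrix m o ℝ) (C : Matrix o n ℝ) (h : M = B * C) :
    M.rank ≤ Fintype.card o := by
  rw [h]
  exact le_trans (Matrix.rank_mul_le_left B C) (Matrix.rank_le_card_width B)

/-- If `S = A S Aᵀ + D` with `A` `E`-supported and `D` diagonal, then
the submatrix of `S` with rows `V∖U` and columns `U` has rank at most `|pa(U)|`; and the
analogous statement holds for every slice of a 3-tensor `T` satisfying the third-order
discrete Lyapunov equation with diagonal `Ω`. -/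
theorem stmt_15 (p : ℕ) (hp : 1 ≤ p) (E : Finset (Fin p × Fin p))
    (A : Matrix (Fin p) (Fin p) ℝ)
    (hsupp : ∀ i j : Fin p, (i, j) ∉ E → A j i = 0)
    (D : Matrix (Fin p) (Fin p) ℝ) (hD : ∀ i j : Fin p, i ≠ j → D i j = 0)
    (S : Matrix (Fin p) (Fin p) ℝ) (hS : S = A * S * Aᵀ + D)
    (U : Finset (Fin p)) :
    (Matrix.of fun (r : {v : Fin p // v ∉ U}) (c : {v : Fin p // v ∈ U}) =>
        S r.1 c.1).rank
      ≤ (Finset.univ.filter fun u : Fin p => ∃ v ∈ U, (u, v) ∈ E).card ∧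
    ∀ (Ω T : Fin p → Fin p → Fin p → ℝ),
      (∀ a b c : Fin p, ¬(a = b ∧ b = c) → Ω a b c = 0) →
      (∀ a b c : Fin p,
        T a b c = (∑ l : Fin p, ∑ m : Fin p, ∑ n : Fin p,
          A a l * A b m * A c n * T l m n) + Ω a b c) →
      ∀ i : Fin p,
        (Matrix.of fun (r : {j : Fin p // i ∈ U → j ≠ i}) (c : {v : Fin p // v ∈ U}) =>
            T i r.1 c.1).rank
          ≤ (Finset.univ.filter fun u : Fin p => ∃ v ∈ U, (u, v) ∈ E).card := by
  classical
  set paU : Finset (Fin p) :=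
    Finset.univ.filter (fun u : Fin p => ∃ v ∈ U, (u, v) ∈ E) with hpaU
  have hcard : Fintype.card {u // u ∈ paU} = paU.card := Fintype.card_coe paU
  have hA0 : ∀ (m c : Fin p), c ∈ U → m ∉ paU → A c m = 0 := by
    intro m c hc hm
    refine hsupp _ _ fun hmem => hm ?_
    simp only [hpaU, Finset.mem_filter, Finset.mem_univ, true_and]
    exact ⟨c, hc, hmem⟩
  have hrestrict : ∀ (f : Fin p → ℝ) (c : Fin p), c ∈ U →
      ∑ m : Fin p, f m * A c m = ∑ m : {u // u ∈ paU}, f m.1 * A c m.1 := by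
    intro f c hc
    rw [Finset.sum_coe_sort paU (fun m => f m * A c m)]
    exact (Finset.sum_subset (Finset.subset_univ paU)
      (fun x _ hx => by rw [hA0 x c hc hx, mul_zero])).symm
  constructor
  · apply le_of_le_of_eq _ hcard
    apply stmt15_aux _
      (Matrix.of fun (r : {v : Fin p // v ∉ U}) (m : {u // u ∈ paU}) => (A * S) r.1 m.1)
      (Matrix.of fun (m : {u // u ∈ paU}) (c : {v : Fin p // v ∈ U}) => A c.1 m.1)
    ext r c
    have hrc : r.1 ≠ c.1 := fun h => r.2 (h ▸ c.2)
    have h1 : S r.1 c.1 = ∑ m : Fin p, (A * S) r.1 m * A c.1 m := by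
      conv_lhs => rw [hS]
      simp [Matrix.add_apply, Matrix.mul_apply, Matrix.transpose_apply, hD _ _ hrc]
    simp only [Matrix.of_apply, Matrix.mul_apply, h1]
    exact hrestrict (fun m => (A * S) r.1 m) c.1 c.2
  · intro Ω T hΩ hT i
    apply le_of_le_of_eq _ hcard
    apply stmt15_aux _
      (Matrix.of fun (r : {j : Fin p // i ∈ U → j ≠ i}) (n : {u // u ∈ paU}) =>
        ∑ l : Fin p, ∑ m : Fin p, A i l * A r.1 m * T l m n.1)
      (Matrix.of fun (n : {u // u ∈ paU}) (c : {v : Fin p // v ∈ U}) => A c.1 n.1)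
    ext r c
    have hΩ0 : Ω i r.1 c.1 = 0 := by
      apply hΩ
      rintro ⟨h1, h2⟩
      exact (r.2 (h1 ▸ h2 ▸ c.2) h1.symm).elim
    have h1 : T i r.1 c.1 =
        ∑ n : Fin p, (∑ l : Fin p, ∑ m : Fin p, A i l * A r.1 m * T l m n) * A c.1 n := by
      have h2 : ∀ l : Fin p,
          (∑ m : Fin p, ∑ n : Fin p, A i l * A r.1 m * A c.1 n * T l m n)
            = ∑ n : Fin p, ∑ m : Fin p, A i l * A r.1 m * A c.1 n * T l m n :=
        fun l => Finset.sum_comm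
      rw [hT i r.1 c.1, hΩ0, add_zero,
        Finset.sum_congr rfl (fun l _ => h2 l), Finset.sum_comm]
      apply Finset.sum_congr rfl
      intro n _
      rw [Finset.sum_mul]
      apply Finset.sum_congr rfl
      intro l _
      rw [Finset.sum_mul]
      apply Finset.sum_congr rfl
      intro m _
      ring
    simp only [Matrix.of_apply, Matrix.mul_apply, h1]
    exact hrestrict (fun n => ∑ l : Fin p, ∑ m : Fin p, A i l * A r.1 m * T l m n) c.1 c.2
end

section
/- Let p ≥ 1, let E be an edge set on V = {0,…,p−1}, let A be an E-supported real p×p matrix, let D be a diagonal real p×p matrix, let S be a real p×p matrix satisfying S = A S Aᵀ + D, let Ω : V×V×V → ℝ be a diagonal 3-tensor (Ω_{abc} = 0 unless a = b = c), and let T : V×V×V → ℝ satisfy T_{abc} = ∑_{l,m,n∈V} A_{al} A_{bm} A_{cn} T_{lmn} + Ω_{abc} for all a, b, c. Let U ⊆ V and pa(U) = {u ∈ V : (u,v) ∈ E for some v ∈ U}. Let Q be the matrix with columns indexed by U whose rows are indexed by the disjoint union of {i ∈ V : i ∉ U} and {(i,j) ∈ V×V : not (i = j and i ∈ U)}, with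 entry S_{iv} in a row of the first kind and entry T_{ijv} in a row of the second kind (column v ∈ U). Then rank(Q) ≤ |pa(U)|. -/
open Matrix

/-- The matrix `Q` obtained by stacking the rows `S_{i·}` for
`i ∉ U` and the rows `T_{ij·}` for `(i,j)` with not (`i = j` and `i ∈ U`), with columns
indexed by `U`, has rank at most `|pa(U)|`. -/
theorem stmt_16 (p : ℕ) (hp : 1 ≤ p) (E : Finset (Fin p × Fin p))
    (A : Matrix (Fin p) (Fin p) ℝ)
    (hsupp : ∀ i j : Fin p, (i, j) ∉ E → A j i = 0)
    (D : Matrix (Fin p) (Fin p) ℝ) (hD : ∀ i j : Fin p, i ≠ j → D i j = 0)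
    (S : Matrix (Fin p) (Fin p) ℝ) (hS : S = A * S * Aᵀ + D)
    (Ω T : Fin p → Fin p → Fin p → ℝ)
    (hΩ : ∀ a b c : Fin p, ¬(a = b ∧ b = c) → Ω a b c = 0)
    (hT : ∀ a b c : Fin p,
      T a b c = (∑ l : Fin p, ∑ m : Fin p, ∑ n : Fin p,
        A a l * A b m * A c n * T l m n) + Ω a b c)
    (U : Finset (Fin p)) :
    (Matrix.of fun
        (r : {i : Fin p // i ∉ U} ⊕ {x : Fin p × Fin p // ¬(x.1 = x.2 ∧ x.1 ∈ U)})
        (c : {v : Fin p // v ∈ U}) =>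
        Sum.elim (fun i : {i : Fin p // i ∉ U} => S i.1 c.1)
          (fun x : {x : Fin p × Fin p // ¬(x.1 = x.2 ∧ x.1 ∈ U)} =>
            T x.1.1 x.1.2 c.1) r).rank
      ≤ (Finset.univ.filter fun u : Fin p => ∃ v ∈ U, (u, v) ∈ E).card := by
  classical
  set pa : Finset (Fin p) := Finset.univ.filter fun u : Fin p => ∃ v ∈ U, (u, v) ∈ E with hpa
  -- A c u = 0 whenever u ∉ pa and c ∈ U
  have hA0 : ∀ (c : Fin p), c ∈ U → ∀ u : Fin p, u ∉ pa → A c u = 0 := by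
    intro c hc u hu
    apply hsupp
    intro hE
    exact hu (Finset.mem_filter.mpr ⟨Finset.mem_univ u, ⟨c, hc, hE⟩⟩)
  set R := {i : Fin p // i ∉ U} ⊕ {x : Fin p × Fin p // ¬(x.1 = x.2 ∧ x.1 ∈ U)}
  set M : Matrix R {u : Fin p // u ∈ pa} ℝ := Matrix.of fun r u =>
    Sum.elim (fun i : {i : Fin p // i ∉ U} => (A * S) i.1 u.1)
      (fun x : {x : Fin p × Fin p // ¬(x.1 = x.2 ∧ x.1 ∈ U)} =>
        ∑ l : Fin p, ∑ m : Fin p, A x.1.1 l * A x.1.2 m * T l m u.1) r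
  set N : Matrix {u : Fin p // u ∈ pa} {v : Fin p // v ∈ U} ℝ :=
    Matrix.of fun u v => A v.1 u.1
  have key : (Matrix.of fun (r : R) (c : {v : Fin p // v ∈ U}) =>
        Sum.elim (fun i : {i : Fin p // i ∉ U} => S i.1 c.1)
          (fun x : {x : Fin p × Fin p // ¬(x.1 = x.2 ∧ x.1 ∈ U)} =>
            T x.1.1 x.1.2 c.1) r) = M * N := by
    ext r c
    have hsum : ∀ f : Fin p → ℝ,
        (∑ u : Fin p, f u * A c.1 u) = ∑ u : {u : Fin p // u ∈ pa}, f u.1 * A c.1 u.1 := by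
      intro f
      rw [Finset.sum_coe_sort pa (fun u => f u * A c.1 u)]
      symm
      apply Finset.sum_subset (Finset.subset_univ pa)
      intro u _ hu
      rw [hA0 c.1 c.2 u hu, mul_zero]
    rcases r with i | x
    · simp only [Matrix.of_apply, Sum.elim_inl, Matrix.mul_apply]
      have h1 : S i.1 c.1 = (A * S * Aᵀ) i.1 c.1 + D i.1 c.1 := by
        have := congrFun (congrFun hS i.1) c.1
        rwa [Matrix.add_apply] at this
      have h2 : D i.1 c.1 = 0 := by
        apply hD; intro h; exact i.2 (h ▸ c.2)
      rw [h1, h2, add_zero, Matrix.mul_apply]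
      simpa [Matrix.transpose_apply, M, N] using hsum (fun u => (A * S) i.1 u)
    · simp only [Matrix.of_apply, Sum.elim_inr, Matrix.mul_apply]
      have hΩ0 : Ω x.1.1 x.1.2 c.1 = 0 := by
        apply hΩ
        rintro ⟨h1, h2⟩
        exact x.2 ⟨h1, by rw [h1, h2]; exact c.2⟩
      have hcomm : ∑ u : Fin p, (∑ l : Fin p, ∑ m : Fin p, A x.1.1 l * A x.1.2 m * T l m u) * A c.1 u
          = ∑ l : Fin p, ∑ m : Fin p, ∑ u : Fin p, A x.1.1 l * A x.1.2 m * A c.1 u * T l m u := by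
        simp only [Finset.sum_mul]
        rw [Finset.sum_comm]
        refine Finset.sum_congr rfl fun l _ => ?_
        rw [Finset.sum_comm]
        exact Finset.sum_congr rfl fun m _ => Finset.sum_congr rfl fun u _ => by ring
      have h3 : T x.1.1 x.1.2 c.1
          = ∑ u : Fin p, (∑ l : Fin p, ∑ m : Fin p, A x.1.1 l * A x.1.2 m * T l m u) * A c.1 u := by
        rw [hT x.1.1 x.1.2 c.1, hΩ0, add_zero, hcomm]
      rw [h3]
      simpa [M, N] using hsum (fun u => ∑ l : Fin p, ∑ m : Fin p, A x.1.1 l * A x.1.2 m * T l m u)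
  rw [key]
  calc (M * N).rank ≤ N.rank := Matrix.rank_mul_le_right M N
    _ ≤ Fintype.card {u : Fin p // u ∈ pa} := Matrix.rank_le_card_height N
    _ = pa.card := Fintype.card_coe pa
end

section
/- For all natural numbers x ≤ y and every real number t, the polynomial family p satisfies the recursion p_{x+1,y+1}(t) = t²·p_{x,y+1}(t) + (1 + (t²−1)·δ_{xy})·p_{x+1,y}(t) + (1−t²)·p_{x,y}(t), where δ_{xy} = 1 if x = y and δ_{xy} = 0 otherwise. -/
/-!
For `x ≤ y`, `p_{x,y}(t)` is the coefficient of `z^x` in `(1 + t²z)^x (1 + z)^y`. The identity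
`(1 + z)(1 + t²z) = (1 + t²z) + z((1 - t²) + t²(1 + z))` turns this into a Pascal-type recursion
of the unordered sums, valid for all `x, y`. When `x = y` this recursion produces the unordered
sum at `(x + 1, x)` instead of `p_{x+1,x} = p_{x,x+1}`; reindexing shows the former is `t²` times
the latter, which is where the factor `1 + (t² - 1) δ_{xy}` comes from.
-/

open Finset Polynomial

/-- `p_{x,y}(t) = ∑_{l=0}^{min(x,y)} t^{2l} binom(max(x,y), min(x,y)−l) binom(min(x,y), l)`. -/
noncomputable def pPoly (x y : ℕ) (t : ℝ) : ℝ :=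
  ∑ l ∈ Finset.range (min x y + 1),
    t ^ (2 * l) * ((max x y).choose (min x y - l) : ℝ) * ((min x y).choose l : ℝ)

noncomputable def pSum (x y : ℕ) (t : ℝ) : ℝ :=
  ∑ l ∈ range (x + 1), t ^ (2 * l) * (y.choose (x - l) : ℝ) * (x.choose l : ℝ)

lemma pPoly_comm (x y : ℕ) (t : ℝ) : pPoly x y t = pPoly y x t := by
  rw [pPoly, pPoly, min_comm, max_comm]

lemma pPoly_eq_pSum {x y : ℕ} (h : x ≤ y) (t : ℝ) : pPoly x y t = pSum x y t := by
  rw [pPoly, pSum, min_eq_left h, max_eq_right h]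

lemma coeff_one_add_C_mul_X_pow {R : Type*} [CommSemiring R] (r : R) (n k : ℕ) :
    ((1 + C r * X) ^ n).coeff k = n.choose k * r ^ k := by
  have : (1 + C r * X) ^ n = ((1 + X) ^ n).comp (C r * X) := by
    rw [pow_comp, add_comp, one_comp, X_comp]
  rw [this, comp_C_mul_X_coeff, coeff_one_add_X_pow]

lemma pSum_eq_coeff (x y : ℕ) (t : ℝ) :
    pSum x y t = ((1 + C (t ^ 2) * X) ^ x * (1 + X) ^ y).coeff x := by
  rw [coeff_mul, Nat.sum_antidiagonal_eq_sum_range_succ_mk, pSum]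
  refine sum_congr rfl fun l _ => ?_
  rw [coeff_one_add_C_mul_X_pow, coeff_one_add_X_pow, pow_mul]
  ring

lemma pSum_succ_succ (x y : ℕ) (t : ℝ) :
    pSum (x + 1) (y + 1) t
      = t ^ 2 * pSum x (y + 1) t + pSum (x + 1) y t + (1 - t ^ 2) * pSum x y t := by
  set A : ℝ[X] := 1 + C (t ^ 2) * X
  have key : A ^ (x + 1) * (1 + X) ^ (y + 1)
      = A ^ (x + 1) * (1 + X) ^ y
        + X * (C (t ^ 2) * (A ^ x * (1 + X) ^ (y + 1)) + (1 - C (t ^ 2)) * (A ^ x * (1 + X) ^ y)) := by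
    ring
  simp only [pSum_eq_coeff]
  rw [key, coeff_add, coeff_X_mul, coeff_add, coeff_C_mul, sub_mul, one_mul, coeff_sub,
    coeff_C_mul]
  ring

lemma pSum_add_left (y d : ℕ) (t : ℝ) : pSum (y + d) y t = t ^ (2 * d) * pSum y (y + d) t := by
  rw [pSum, pSum, show y + d + 1 = d + (y + 1) by omega, sum_range_add, mul_sum]
  have vanish : ∀ l ∈ range d, t ^ (2 * l) * (y.choose (y + d - l) : ℝ) * ((y + d).choose l) = 0 :=
    fun l hl => by
      rw [Nat.choose_eq_zero_of_lt (by simp at hl; omega), Nat.cast_zero, mul_zero, zero_mul]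
  rw [sum_eq_zero vanish, zero_add]
  refine sum_congr rfl fun m hm => ?_
  have hm : m ≤ y := Nat.lt_succ_iff.mp (mem_range.mp hm)
  rw [show y + d - (d + m) = y - m by omega, Nat.choose_symm hm,
    Nat.choose_symm_of_eq_add (show y + d = d + m + (y - m) by omega), mul_add, pow_add]
  ring

/-- The recursion
`p_{x+1,y+1}(t) = t² p_{x,y+1}(t) + (1 + (t²−1) δ_{xy}) p_{x+1,y}(t) + (1−t²) p_{x,y}(t)`
for all `x ≤ y`. -/
theorem stmt_17 (x y : ℕ) (hxy : x ≤ y) (t : ℝ) :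
    pPoly (x + 1) (y + 1) t
      = t ^ 2 * pPoly x (y + 1) t
        + (1 + (t ^ 2 - 1) * (if x = y then 1 else 0)) * pPoly (x + 1) y t
        + (1 - t ^ 2) * pPoly x y t := by
  rcases hxy.eq_or_lt with rfl | hlt
  · have diagonal : pSum (x + 1) x t = t ^ 2 * pSum x (x + 1) t := pSum_add_left x 1 t
    rw [pPoly_comm (x + 1) x]
    simp only [pPoly_eq_pSum (x.le_add_right 1), pPoly_eq_pSum le_rfl, pSum_succ_succ, diagonal,
      if_true]
    ring
  · simp only [pPoly_eq_pSum (Nat.succ_le_succ hxy), pPoly_eq_pSum (Nat.le_succ_of_le hxy),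
      pPoly_eq_pSum hlt, pPoly_eq_pSum hxy, pSum_succ_succ, if_neg hlt.ne]
    ring
end

section
/- For all natural numbers x ≤ y and every real number t with t² ≠ 1, the rational function C satisfies the recursion C(x+1, y+1; t) = (1/(1−t²)) · ( t·(C(x, y+1; t) + C(x+1, y; t)) + C(x, y; t) ). -/
/-- `C(x,y;t) = t^{|x−y|} p_{x,y}(t) / (1−t²)^{x+y+1}`. -/
noncomputable def Ccoef (x y : ℕ) (t : ℝ) : ℝ :=
  t ^ (max x y - min x y) * pPoly x y t / (1 - t ^ 2) ^ (x + y + 1)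

noncomputable def Paux (a b : ℕ) (t : ℝ) : ℝ :=
  ∑ l ∈ Finset.range (a + 1),
    t ^ (2 * l) * (b.choose (a - l) : ℝ) * (a.choose l : ℝ)

lemma pPoly_eq_Paux (x y : ℕ) (h : x ≤ y) (t : ℝ) : pPoly x y t = Paux x y t := by
  simp [pPoly, Paux, min_eq_left h, max_eq_right h]

lemma pPoly_eq_Paux' (x y : ℕ) (h : y ≤ x) (t : ℝ) : pPoly x y t = Paux y x t := by
  simp [pPoly, Paux, min_eq_right h, max_eq_left h]

lemma Paux_shift (x : ℕ) (t : ℝ) : Paux (x + 1) x t = t ^ 2 * Paux x (x + 1) t := by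
  unfold Paux
  rw [Finset.sum_range_succ' _ (x + 1), Finset.mul_sum]
  simp only [Nat.sub_zero, Nat.choose_succ_self, Nat.cast_zero, mul_zero, zero_mul, add_zero]
  refine Finset.sum_congr rfl fun l hl => ?_
  simp only [Finset.mem_range] at hl
  have h1 : x + 1 - (l + 1) = x - l := by omega
  have h2 : (x + 1).choose (l + 1) = (x + 1).choose (x - l) := by
    rw [← Nat.choose_symm (by omega : l + 1 ≤ x + 1),
      show x + 1 - (l + 1) = x - l from by omega]
  rw [h1, h2]
  have h4 : (x.choose (x - l) : ℝ) = (x.choose l : ℝ) := by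
    rw [Nat.choose_symm (by omega : l ≤ x)]
  rw [h4]
  ring

lemma Paux_diff (a b : ℕ) (t : ℝ) :
    Paux a (b + 1) t = Paux a b t +
      ∑ l ∈ Finset.range a, t ^ (2 * l) * (b.choose (a - 1 - l) : ℝ) * (a.choose l : ℝ) := by
  unfold Paux
  rw [Finset.sum_range_succ, Finset.sum_range_succ (fun l => t ^ (2*l) * (b.choose (a-l) : ℝ) * (a.choose l : ℝ))]
  simp only [Nat.sub_self, Nat.choose_zero_right, Nat.cast_one]
  have hsum : ∑ l ∈ Finset.range a, t ^ (2 * l) * ((b + 1).choose (a - l) : ℝ) * (a.choose l : ℝ)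
      = ∑ l ∈ Finset.range a, (t ^ (2 * l) * (b.choose (a - l) : ℝ) * (a.choose l : ℝ)
        + t ^ (2 * l) * (b.choose (a - 1 - l) : ℝ) * (a.choose l : ℝ)) := by
    refine Finset.sum_congr rfl fun l hl => ?_
    simp only [Finset.mem_range] at hl
    have h1 : a - l = (a - 1 - l) + 1 := by omega
    have h2 : a - 1 - l + 1 = a - l := by omega
    rw [h1, Nat.choose_succ_succ]
    simp only [Nat.succ_eq_add_one]
    rw [h2]
    push_cast
    ring
  rw [hsum, Finset.sum_add_distrib]
  ring

lemma Paux_E (x y : ℕ) (t : ℝ) :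
    (∑ l ∈ Finset.range (x + 1), t ^ (2 * l) * (y.choose (x - l) : ℝ) * ((x + 1).choose l : ℝ))
      = t ^ 2 * (∑ l ∈ Finset.range x, t ^ (2 * l) * (y.choose (x - 1 - l) : ℝ) * (x.choose l : ℝ))
        + ∑ l ∈ Finset.range (x + 1), t ^ (2 * l) * (y.choose (x - l) : ℝ) * (x.choose l : ℝ) := by
  rw [Finset.sum_range_succ' _ x,
    Finset.sum_range_succ' (fun l => t ^ (2*l) * (y.choose (x-l) : ℝ) * (x.choose l : ℝ)) x,
    Finset.mul_sum]
  have hsum : ∑ l ∈ Finset.range x,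
        t ^ (2 * (l + 1)) * (y.choose (x - (l + 1)) : ℝ) * ((x + 1).choose (l + 1) : ℝ)
      = ∑ l ∈ Finset.range x, (t ^ 2 * (t ^ (2 * l) * (y.choose (x - 1 - l) : ℝ) * (x.choose l : ℝ))
          + t ^ (2 * (l + 1)) * (y.choose (x - (l + 1)) : ℝ) * (x.choose (l + 1) : ℝ)) := by
    refine Finset.sum_congr rfl fun l hl => ?_
    simp only [Finset.mem_range] at hl
    have h1 : x - (l + 1) = x - 1 - l := by omega
    rw [h1, Nat.choose_succ_succ]
    push_cast
    ring
  rw [hsum, Finset.sum_add_distrib]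
  simp only [Nat.sub_zero, Nat.choose_zero_right, Nat.cast_one]
  ring

lemma Paux_key (x y : ℕ) (h : x ≤ y) (t : ℝ) :
    Paux (x + 1) (y + 1) t
      = t ^ 2 * Paux x (y + 1) t + Paux (x + 1) y t + (1 - t ^ 2) * Paux x y t := by
  rw [Paux_diff (x + 1) y t, Paux_diff x y t]
  simp only [Nat.add_sub_cancel]
  unfold Paux
  linear_combination Paux_E x y t

lemma combine1 (u t P1 P2 P4 : ℝ) (hu : u ≠ 0) (n : ℕ)
    (h : P1 = t ^ 2 * P2 + t ^ 2 * P2 + u * P4) :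
    P1 / u ^ (n + 2) = 1 / u * (t * (t * P2 / u ^ (n + 1) + t * P2 / u ^ (n + 1)) + P4 / u ^ n) := by
  rw [h]
  field_simp
  ring

lemma combine2 (u t P1 P2 P3 P4 : ℝ) (hu : u ≠ 0) (n d : ℕ)
    (h : P1 = t ^ 2 * P2 + P3 + u * P4) :
    t ^ (d + 1) * P1 / u ^ (n + 3)
      = 1 / u * (t * (t ^ (d + 2) * P2 / u ^ (n + 2) + t ^ d * P3 / u ^ (n + 2))
          + t ^ (d + 1) * P4 / u ^ (n + 1)) := by
  rw [h]
  field_simp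
  ring

/-- The recursion
`C(x+1,y+1;t) = (1/(1−t²)) (t (C(x,y+1;t) + C(x+1,y;t)) + C(x,y;t))`
for all `x ≤ y` and `t` with `t² ≠ 1`. -/
theorem stmt_18 (x y : ℕ) (hxy : x ≤ y) (t : ℝ) (ht : t ^ 2 ≠ 1) :
    Ccoef (x + 1) (y + 1) t
      = (1 / (1 - t ^ 2)) *
          (t * (Ccoef x (y + 1) t + Ccoef (x + 1) y t) + Ccoef x y t) := by
  have hu : (1 : ℝ) - t ^ 2 ≠ 0 := by intro h; apply ht; linarith
  rcases eq_or_lt_of_le hxy with rfl | hlt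
  · have hkey := Paux_key x x le_rfl t
    rw [Paux_shift x t] at hkey
    unfold Ccoef
    rw [pPoly_eq_Paux (x+1) (x+1) le_rfl, pPoly_eq_Paux x (x+1) (by omega),
      pPoly_eq_Paux' (x+1) x (by omega), pPoly_eq_Paux x x le_rfl]
    simp only [max_self, min_self, Nat.sub_self, pow_zero, one_mul,
      max_eq_right (Nat.le_succ x), min_eq_left (Nat.le_succ x),
      max_eq_left (Nat.le_succ x), min_eq_right (Nat.le_succ x),
      Nat.add_sub_cancel_left, pow_one]
    rw [show x + 1 + (x + 1) + 1 = (x + x + 1) + 2 from by omega,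
      show x + (x + 1) + 1 = (x + x + 1) + 1 from by omega,
      show x + 1 + x + 1 = (x + x + 1) + 1 from by omega,
      show x + x + 1 = (x + x + 1) from rfl]
    simp only [show x.succ - x = 1 from by omega, pow_one]
    refine combine1 _ _ _ _ _ hu _ ?_
    linear_combination hkey
  · obtain ⟨d, rfl⟩ : ∃ d, y = x + d + 1 := ⟨y - x - 1, by omega⟩
    have hkey := Paux_key x (x + d + 1) (by omega) t
    unfold Ccoef
    rw [pPoly_eq_Paux (x+1) (x+d+1+1) (by omega), pPoly_eq_Paux x (x+d+1+1) (by omega),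
      pPoly_eq_Paux (x+1) (x+d+1) (by omega), pPoly_eq_Paux x (x+d+1) (by omega)]
    rw [show max (x+1) (x+d+1+1) - min (x+1) (x+d+1+1) = d + 1 from by
        rw [max_eq_right (by omega), min_eq_left (by omega)]; omega,
      show max x (x+d+1+1) - min x (x+d+1+1) = d + 2 from by
        rw [max_eq_right (by omega), min_eq_left (by omega)]; omega,
      show max (x+1) (x+d+1) - min (x+1) (x+d+1) = d from by
        rw [max_eq_right (by omega), min_eq_left (by omega)]; omega,
      show max x (x+d+1) - min x (x+d+1) = d + 1 from by
        rw [max_eq_right (by omega), min_eq_left (by omega)]; omega,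
      show x + 1 + (x + d + 1 + 1) + 1 = (x + x + d + 1) + 3 from by omega,
      show x + (x + d + 1 + 1) + 1 = (x + x + d + 1) + 2 from by omega,
      show x + 1 + (x + d + 1) + 1 = (x + x + d + 1) + 2 from by omega,
      show x + (x + d + 1) + 1 = (x + x + d + 1) + 1 from by omega]
    exact combine2 _ _ _ _ _ _ hu _ _ hkey
end
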